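/- arXiv:2002.04565 — 9 statements merged into one kernel-verified Lean document; each statement's English description precedes it below -/
import Mathlib

section
/- Let N ≥ 2 and 1 ≤ k ≤ N−1. Let u : ℝ^N → ℝ be upper semicontinuous, one-dimensional (i.e. u(x) = v(x_N) for some v : ℝ → ℝ), with |u(x)| < 1 for all x, and assume u is a viscosity subsolution of P⁻_k(D²u) + u − u³ = 0 in ℝ^N. Then u(x) ≥ 0 for all x ∈ ℝ^N. -/
/-- The truncated Laplacian `P⁻ₖ(X)`: the sum of the `k` smallest eigenvalues of the
symmetric matrix `X`, expressed via the Ky Fan variational principle as the infimum of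
`∑ᵢ ⟨X vᵢ, vᵢ⟩` over orthonormal families `v₁, …, v_k`. -/
noncomputable def truncLap {N : ℕ} (k : ℕ) (X : Matrix (Fin N) (Fin N) ℝ) : ℝ :=
  sInf { s : ℝ | ∃ v : Fin k → (Fin N → ℝ),
    (∀ i j, dotProduct (v i) (v j) = if i = j then (1 : ℝ) else 0) ∧
    s = ∑ i, dotProduct (X.mulVec (v i)) (v i) }

/-- The Hessian matrix of `φ : ℝ^N → ℝ` at `x`. -/
noncomputable def hess {N : ℕ} (φ : EuclideanSpace ℝ (Fin N) → ℝ)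
    (x : EuclideanSpace ℝ (Fin N)) : Matrix (Fin N) (Fin N) ℝ :=
  fun i j => iteratedFDeriv ℝ 2 φ x ![EuclideanSpace.single i 1, EuclideanSpace.single j 1]

/-- `u` is a viscosity subsolution of `P⁻ₖ(D²u) + f(u) = 0` in `ℝ^N`. -/
def IsViscSubsol {N : ℕ} (k : ℕ) (f : ℝ → ℝ) (u : EuclideanSpace ℝ (Fin N) → ℝ) : Prop :=
  ∀ φ : EuclideanSpace ℝ (Fin N) → ℝ, ContDiff ℝ 2 φ →
    ∀ x₀, IsLocalMax (fun x => u x - φ x) x₀ →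
      0 ≤ truncLap k (hess φ x₀) + f (u x₀)

/-- `u` is a viscosity supersolution of `P⁻ₖ(D²u) + f(u) = 0` in `ℝ^N`. -/
def IsViscSupersol {N : ℕ} (k : ℕ) (f : ℝ → ℝ) (u : EuclideanSpace ℝ (Fin N) → ℝ) : Prop :=
  ∀ φ : EuclideanSpace ℝ (Fin N) → ℝ, ContDiff ℝ 2 φ →
    ∀ x₀, IsLocalMin (fun x => u x - φ x) x₀ →
      truncLap k (hess φ x₀) + f (u x₀) ≤ 0

/-!
Touch `u` from above by the parabola `φ(x) = M (x_N - t₀)²` with `M = 2 / r²`. Since `|v| < 1`,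
the oscillation of `v` is less than `2 = M r²`, so `v(t) - M (t - t₀)²` attains its maximum on
`[t₀ - r, t₀ + r]` at an interior point, where `u - φ` has a local maximum. The Hessian of `φ`
is `2M e_N e_Nᵀ`, and since `k ≤ N - 1` the orthonormal vectors `e_1, …, e_k` are in its kernel,
so `P⁻_k(D²φ) ≤ 0`. The subsolution inequality then gives `u - u³ ≥ 0`, i.e. `u ≥ 0`, at that
point. Hence every neighbourhood of every `t₀` contains a point where `v ≥ 0`, and upper
semicontinuity gives `v(t₀) ≥ 0`.
-/

open Matrix Topology

theorem hess_comp_proj {N : ℕ} {g : ℝ → ℝ} (hg : ContDiff ℝ 2 g) (ℓ : Fin N)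
    (x : EuclideanSpace ℝ (Fin N)) :
    hess (fun y => g (y ℓ)) x = Matrix.single ℓ ℓ (iteratedDeriv 2 g (x ℓ)) := by
  ext i j
  have hm : ∀ m : Fin 2 → ℝ,
      iteratedFDeriv ℝ 2 g (x ℓ) m = (∏ a, m a) * iteratedDeriv 2 g (x ℓ) := by
    intro m
    rw [iteratedDeriv_eq_iteratedFDeriv, ← smul_eq_mul, ← ContinuousMultilinearMap.map_smul_univ]
    simp
  rw [hess, show (fun y : EuclideanSpace ℝ (Fin N) => g (y ℓ)) = g ∘ EuclideanSpace.proj ℓ from rfl,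
    (EuclideanSpace.proj ℓ).iteratedFDeriv_comp_right hg x le_rfl,
    ContinuousMultilinearMap.compContinuousLinearMap_apply, EuclideanSpace.coe_proj, hm]
  simp only [Fin.prod_univ_two, Matrix.cons_val_zero, Matrix.cons_val_one, PiLp.single_apply,
    Matrix.single_apply]
  split_ifs <;> grind

theorem single_mulVec_dotProduct {N : ℕ} (ℓ : Fin N) (a : ℝ) (w : Fin N → ℝ) :
    Matrix.single ℓ ℓ a *ᵥ w ⬝ᵥ w = a * w ℓ ^ 2 := by
  simp only [dotProduct, single_mulVec, Function.update_apply, Pi.zero_apply, ite_mul, zero_mul,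
    Finset.sum_ite_eq', Finset.mem_univ, ↓reduceIte]
  ring

theorem truncLap_le_sum {N k : ℕ} {X : Matrix (Fin N) (Fin N) ℝ} (hX : ∀ w, 0 ≤ X *ᵥ w ⬝ᵥ w)
    {v : Fin k → Fin N → ℝ} (hv : ∀ i j, v i ⬝ᵥ v j = if i = j then 1 else 0) :
    truncLap k X ≤ ∑ i, X *ᵥ v i ⬝ᵥ v i :=
  csInf_le ⟨0, by rintro s ⟨w, -, rfl⟩; exact Finset.sum_nonneg fun i _ => hX (w i)⟩ ⟨v, hv, rfl⟩

theorem truncLap_single_last_nonpos {n k : ℕ} (hk : k ≤ n) {a : ℝ} (ha : 0 ≤ a) :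
    truncLap k (Matrix.single (Fin.last n) (Fin.last n) a) ≤ 0 := by
  set e : Fin k → Fin (n + 1) := fun i => (Fin.castLE hk i).castSucc
  have he : Function.Injective e := (Fin.castSucc_injective n).comp (Fin.castLE_injective hk)
  have hv : ∀ i j, Pi.single (e i) (1 : ℝ) ⬝ᵥ Pi.single (e j) 1 = if i = j then 1 else 0 := by
    intro i j
    simp [dotProduct_single, Pi.single_apply, he.eq_iff, eq_comm]
  calc truncLap k (Matrix.single (Fin.last n) (Fin.last n) a)
      ≤ ∑ i, Matrix.single (Fin.last n) (Fin.last n) a *ᵥ Pi.single (e i) 1 ⬝ᵥ Pi.single (e i) 1 :=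
        truncLap_le_sum (fun w => by rw [single_mulVec_dotProduct]; positivity) hv
    _ = 0 := by
        refine Finset.sum_eq_zero fun i _ => ?_
        rw [single_mulVec_dotProduct, Pi.single_eq_of_ne (Fin.castSucc_ne_last _).symm]
        ring

theorem exists_isLocalMax_sub_sq {v : ℝ → ℝ} (hv : UpperSemicontinuous v)
    (hbd : ∀ s, |v s| < 1) (t₀ : ℝ) {r : ℝ} (hr : 0 < r) :
    ∃ t ∈ Metric.ball t₀ r, IsLocalMax (fun s => v s - 2 / r ^ 2 * (s - t₀) ^ 2) t := by
  set F := fun s => v s - 2 / r ^ 2 * (s - t₀) ^ 2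
  have hF : UpperSemicontinuous F :=
    hv.add (by fun_prop : Continuous fun s => -(2 / r ^ 2 * (s - t₀) ^ 2)).upperSemicontinuous
  obtain ⟨t, ht, hmax⟩ := (hF.upperSemicontinuousOn _).exists_isMaxOn
    (Set.nonempty_of_mem (Metric.mem_closedBall_self hr.le)) (isCompact_closedBall t₀ r)
  have hFt : v t₀ ≤ F t := by simpa [F] using hmax (Metric.mem_closedBall_self hr.le)
  have hpen : 2 / r ^ 2 * (t - t₀) ^ 2 < 2 := by
    have hlo : -1 < v t₀ := (abs_lt.1 (hbd t₀)).1
    have hhi : v t < 1 := (abs_lt.1 (hbd t)).2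
    simp only [F] at hFt
    linarith
  have hin : t ∈ Metric.ball t₀ r := by
    rw [Metric.mem_ball, Real.dist_eq, ← sq_lt_sq₀ (abs_nonneg _) hr.le, sq_abs]
    rwa [div_mul_eq_mul_div, div_lt_iff₀ (by positivity), mul_lt_mul_iff_right₀ two_pos] at hpen
  exact ⟨t, hin, hmax.isLocalMax (Metric.closedBall_mem_nhds_of_mem hin)⟩

theorem IsViscSubsol.nonneg_of_isLocalMax_sub_sq {n k : ℕ} (hk : k ≤ n + 1)
    {u : EuclideanSpace ℝ (Fin (n + 2)) → ℝ} (hsub : IsViscSubsol k (fun s => s - s ^ 3) u)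
    {M t₀ : ℝ} (hM : 0 ≤ M) {x : EuclideanSpace ℝ (Fin (n + 2))}
    (hx : IsLocalMax (fun y => u y - M * (y (Fin.last (n + 1)) - t₀) ^ 2) x)
    (hux : |u x| < 1) : 0 ≤ u x := by
  set g : ℝ → ℝ := fun s => M * (s - t₀) ^ 2
  have hg : ContDiff ℝ 2 g := by fun_prop
  have hg2 : iteratedDeriv 2 g = fun _ => M * 2 := by simp [g, iteratedDeriv_succ]
  have htrunc : truncLap k (hess (fun y => g (y (Fin.last (n + 1)))) x) ≤ 0 := by
    rw [hess_comp_proj hg, hg2]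
    exact truncLap_single_last_nonpos hk (by positivity)
  have hφ : ContDiff ℝ 2 fun y : EuclideanSpace ℝ (Fin (n + 2)) => g (y (Fin.last (n + 1))) :=
    hg.comp (EuclideanSpace.proj (𝕜 := ℝ) (Fin.last (n + 1))).contDiff
  have hf : 0 ≤ u x - u x ^ 3 := by
    have := hsub _ hφ x hx
    linarith
  obtain ⟨hlo, hhi⟩ := abs_lt.1 hux
  refine nonneg_of_mul_nonneg_left (b := (1 - u x) * (1 + u x)) ?_ (by nlinarith)
  linarith

theorem stmt0_general {n : ℕ} (k : ℕ) (hk2 : k ≤ n + 1)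
    (u : EuclideanSpace ℝ (Fin (n + 2)) → ℝ) (v : ℝ → ℝ)
    (husc : UpperSemicontinuous u)
    (h1d : ∀ x, u x = v (x (Fin.last (n + 1))))
    (hbd : ∀ x, |u x| < 1)
    (hsub : IsViscSubsol k (fun s => s - s ^ 3) u) :
    ∀ x, 0 ≤ u x := by
  set ℓ := Fin.last (n + 1)
  set e : ℝ → EuclideanSpace ℝ (Fin (n + 2)) := fun t => t • EuclideanSpace.single ℓ 1
  have he : ∀ t, e t ℓ = t := fun t => by simp [e]
  have hv : v = u ∘ e := funext fun t => by simp [h1d, he]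
  have hv_usc : UpperSemicontinuous v := hv ▸ husc.comp (by fun_prop)
  have hv_bd : ∀ t, |v t| < 1 := fun t => hv ▸ hbd (e t)
  have hv_nonneg_near : ∀ t₀, ∃ᶠ t in 𝓝 t₀, 0 ≤ v t := by
    refine fun t₀ => Metric.nhds_basis_ball.frequently_iff.2 fun r hr => ?_
    obtain ⟨t, ht, hmax⟩ := exists_isLocalMax_sub_sq hv_usc hv_bd t₀ hr
    replace hmax : IsLocalMax (fun s => v s - 2 / r ^ 2 * (s - t₀) ^ 2) (e t ℓ) := by rwa [he]
    have hloc : IsLocalMax (fun y => u y - 2 / r ^ 2 * (y ℓ - t₀) ^ 2) (e t) := by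
      simpa only [Function.comp_def, h1d] using
        hmax.comp_continuous (g := fun y : EuclideanSpace ℝ (Fin (n + 2)) => y ℓ) (b := e t)
          (by fun_prop)
    refine ⟨t, ht, ?_⟩
    simpa [h1d, he] using hsub.nonneg_of_isLocalMax_sub_sq hk2 (by positivity) hloc (hbd _)
  intro x
  rw [h1d]
  exact hv_usc.frequently _ 0 (hv_nonneg_near _)

/-- any USC one-dimensional viscosity subsolution of
`P⁻ₖ(D²u) + u - u³ = 0` in `ℝ^N` (N = n+2 ≥ 2, 1 ≤ k ≤ N-1) with `|u| < 1`
is nonnegative. -/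
theorem stmt0 {n : ℕ} (k : ℕ) (hk1 : 1 ≤ k) (hk2 : k ≤ n + 1)
    (u : EuclideanSpace ℝ (Fin (n + 2)) → ℝ) (v : ℝ → ℝ)
    (husc : UpperSemicontinuous u)
    (h1d : ∀ x, u x = v (x (Fin.last (n + 1))))
    (hbd : ∀ x, |u x| < 1)
    (hsub : IsViscSubsol k (fun s => s - s ^ 3) u) :
    ∀ x, 0 ≤ u x :=
  stmt0_general k hk2 u v husc h1d hbd hsub
end

section
/- Let v : ℝ → ℝ be a C² function with |v(t)| < 1 for all t ∈ ℝ, satisfying min(v''(t), 0) + v(t) − v(t)³ = 0 for every t ∈ ℝ. Then v ≡ 0. -/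
/-!
Since `min (v'') 0 ≤ 0` and `|v| < 1`, the equation forces `v ≥ 0`, and wherever `v > 0` it
reduces to `v'' = v ^ 3 - v < 0`. If `v` had no zero it would be concave and bounded below on `ℝ`,
hence constant, contradicting `v'' < 0`. So `v` vanishes at some `a`, a global minimum, where
`v' a = 0`. The energy `v' ^ 2 / 2 + v ^ 2 / 2 - v ^ 4 / 4` is conserved (at zeros of `v` because
`v' = 0` there), so it vanishes identically; for `|v| < 1` this forces `v = 0`.
-/

open Set

theorem ConcaveOn.le_add_deriv_mul_sub {f : ℝ → ℝ} (hf : ConcaveOn ℝ univ f) {x : ℝ}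
    (hfx : DifferentiableAt ℝ f x) (y : ℝ) : f y ≤ f x + deriv f x * (y - x) := by
  rcases lt_trichotomy y x with hyx | rfl | hxy
  · have h := hf.deriv_le_slope (mem_univ y) (mem_univ x) hyx hfx
    rw [slope_def_field, le_div_iff₀ (sub_pos.2 hyx)] at h
    linarith
  · simp
  · have h := hf.slope_le_deriv (mem_univ x) (mem_univ y) hxy hfx
    rw [slope_def_field, div_le_iff₀ (sub_pos.2 hxy)] at h
    linarith

theorem ConcaveOn.deriv_eq_zero_of_bddBelow {f : ℝ → ℝ} (hf : ConcaveOn ℝ univ f)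
    (hb : BddBelow (range f)) {x : ℝ} (hfx : DifferentiableAt ℝ f x) : deriv f x = 0 := by
  obtain ⟨m, hm⟩ := hb
  by_contra hne
  have htangent := hf.le_add_deriv_mul_sub hfx (x - (f x - m + 1) / deriv f x)
  have hval : deriv f x * (x - (f x - m + 1) / deriv f x - x) = m - f x - 1 := by
    field_simp
    ring
  linarith [hm (mem_range_self (x - (f x - m + 1) / deriv f x))]

theorem pow_three_sub_self_neg {x : ℝ} (hx : |x| < 1) (hpos : 0 < x) : x ^ 3 - x < 0 := by
  obtain ⟨hx₁, hx₂⟩ := abs_lt.mp hx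
  nlinarith [mul_pos hpos (mul_pos (sub_pos.2 hx₂) (neg_lt_iff_pos_add.1 hx₁))]

theorem nonneg_of_min_add_sub_pow_three_eq_zero {a x : ℝ} (hx : |x| < 1)
    (h : min a 0 + x - x ^ 3 = 0) : 0 ≤ x := by
  by_contra! hneg
  have := pow_three_sub_self_neg (x := -x) (by rwa [abs_neg]) (neg_pos.2 hneg)
  nlinarith [min_le_right a 0]

theorem eq_pow_three_sub_of_min_add_sub_pow_three_eq_zero {a x : ℝ} (hx : |x| < 1) (hpos : 0 < x)
    (h : min a 0 + x - x ^ 3 = 0) : a = x ^ 3 - x := by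
  have hneg := pow_three_sub_self_neg hx hpos
  rcases le_or_gt a 0 with ha | ha
  · rw [min_eq_left ha] at h
    linarith
  · rw [min_eq_right ha.le] at h
    linarith

/-- The conserved energy of `v'' = v ^ 3 - v`. -/
noncomputable def energy (v : ℝ → ℝ) (t : ℝ) : ℝ :=
  deriv v t ^ 2 / 2 + v t ^ 2 / 2 - v t ^ 4 / 4

theorem hasDerivAt_energy {v : ℝ → ℝ} {t : ℝ} (hv : DifferentiableAt ℝ v t)
    (hv' : DifferentiableAt ℝ (deriv v) t) :
    HasDerivAt (energy v) (deriv v t * (deriv (deriv v) t + v t - v t ^ 3)) t := by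
  refine (((hv'.hasDerivAt.pow 2).div_const 2).add ((hv.hasDerivAt.pow 2).div_const 2)
    |>.sub ((hv.hasDerivAt.pow 4).div_const 4)).congr_deriv ?_
  push_cast
  ring

theorem energy_eq_of_deriv_mul_eq_zero {v : ℝ → ℝ} (hv : Differentiable ℝ v)
    (hv' : Differentiable ℝ (deriv v))
    (h : ∀ t, deriv v t * (deriv (deriv v) t + v t - v t ^ 3) = 0) (s t : ℝ) :
    energy v s = energy v t := by
  have hE t : HasDerivAt (energy v) 0 t := h t ▸ hasDerivAt_energy (hv t) (hv' t)
  exact is_const_of_deriv_eq_zero (fun t ↦ (hE t).differentiableAt) (fun t ↦ (hE t).deriv) s t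

theorem eq_zero_of_energy_eq_zero {v : ℝ → ℝ} {t : ℝ} (hv : |v t| < 1) (hE : energy v t = 0) :
    v t = 0 := by
  have hsq : v t ^ 2 < 1 := by nlinarith [abs_lt.mp hv]
  have : 0 ≤ v t ^ 2 * (1 - v t ^ 2) := mul_nonneg (sq_nonneg _) (by linarith)
  unfold energy at hE
  nlinarith [sq_nonneg (deriv v t)]

theorem exists_eq_zero_of_min_deriv_add_sub_pow_three_eq_zero {v : ℝ → ℝ}
    (hv : Differentiable ℝ v) (hv' : Differentiable ℝ (deriv v)) (hbd : ∀ t, |v t| < 1)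
    (heq : ∀ t, min (deriv (deriv v) t) 0 + v t - v t ^ 3 = 0) : ∃ a, v a = 0 := by
  by_contra! hne
  have hpos t : 0 < v t :=
    (nonneg_of_min_add_sub_pow_three_eq_zero (hbd t) (heq t)).lt_of_ne' (hne t)
  have hv'' t : deriv (deriv v) t = v t ^ 3 - v t :=
    eq_pow_three_sub_of_min_add_sub_pow_three_eq_zero (hbd t) (hpos t) (heq t)
  have hconcave : ConcaveOn ℝ univ v :=
    concaveOn_of_deriv2_nonpos' convex_univ hv.differentiableOn hv'.differentiableOn
      fun t _ ↦ by simpa [hv''] using (pow_three_sub_self_neg (hbd t) (hpos t)).le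
  have hflat : deriv v = 0 := funext fun t ↦
    hconcave.deriv_eq_zero_of_bddBelow ⟨0, forall_mem_range.2 fun t ↦ (hpos t).le⟩ (hv t)
  have := pow_three_sub_self_neg (hbd 0) (hpos 0)
  rw [← hv'', hflat] at this
  simp at this

theorem eq_zero_of_min_deriv_add_sub_pow_three_eq_zero {v : ℝ → ℝ} {a : ℝ}
    (hv : Differentiable ℝ v) (hv' : Differentiable ℝ (deriv v)) (hbd : ∀ t, |v t| < 1)
    (heq : ∀ t, min (deriv (deriv v) t) 0 + v t - v t ^ 3 = 0) (ha : v a = 0) (t : ℝ) :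
    v t = 0 := by
  have hnonneg t : 0 ≤ v t := nonneg_of_min_add_sub_pow_three_eq_zero (hbd t) (heq t)
  have hcrit : ∀ s, v s = 0 → deriv v s = 0 := fun s hs ↦
    IsLocalMin.deriv_eq_zero (Filter.Eventually.of_forall fun r ↦ hs ▸ hnonneg r)
  have hconserved : ∀ s, deriv v s * (deriv (deriv v) s + v s - v s ^ 3) = 0 := by
    intro s
    rcases (hnonneg s).eq_or_lt with hs | hs
    · rw [hcrit s hs.symm, zero_mul]
    · rw [eq_pow_three_sub_of_min_add_sub_pow_three_eq_zero (hbd s) hs (heq s)]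
      ring
  have hEa : energy v a = 0 := by simp [energy, ha, hcrit a ha]
  exact eq_zero_of_energy_eq_zero (hbd t)
    ((energy_eq_of_deriv_mul_eq_zero hv hv' hconserved t a).trans hEa)

/-- if `v : ℝ → ℝ` is C², `|v| < 1`, and
`min(v''(t), 0) + v(t) - v(t)³ = 0` for every `t` (the classical one-dimensional form of
`P⁻ₖ(D²u) + u - u³ = 0`), then `v ≡ 0`. -/
theorem stmt1 (v : ℝ → ℝ) (hv : ContDiff ℝ 2 v)
    (hbd : ∀ t, |v t| < 1)
    (heq : ∀ t, min (deriv (deriv v) t) 0 + v t - (v t) ^ 3 = 0) :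
    ∀ t, v t = 0 := by
  have hv₁ : Differentiable ℝ v := hv.differentiable two_ne_zero
  have hv₂ : Differentiable ℝ (deriv v) :=
    (hv.iterate_deriv' 1 1).differentiable one_ne_zero
  obtain ⟨a, ha⟩ := exists_eq_zero_of_min_deriv_add_sub_pow_three_eq_zero hv₁ hv₂ hbd heq
  exact eq_zero_of_min_deriv_add_sub_pow_three_eq_zero hv₁ hv₂ hbd heq ha
end

section
/- Let N ≥ 2 and 1 ≤ k ≤ N−1, and let c ≥ 0. Define ũ : ℝ^N → ℝ by ũ(x) = tanh((x_N − c)/√2) if x_N ≥ c, ũ(x) = 0 if |x_N| < c, and ũ(x) = −tanh((x_N + c)/√2) if x_N ≤ −c. Then ũ is continuous, |ũ(x)| < 1 for all x, ũ is a viscosity solution of P⁻_k(D²u) + u − u³ = 0 in ℝ^N, and ũ(x', x_N) → 1 as x_N → +∞ and as x_N → −∞ (in particular ũ is not monotone in the x_N-direction). -/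
/-!
The profile `ũ(x) = w(x_N)` is the maximum of the three solutions `tanh((t - c)/√2)`,
`-tanh((t + c)/√2)` and `0` of the ODE `W'' + W - W³ = 0`. If `φ` touches `ũ` from above at `x`,
it also touches the solution `W` realising the maximum there, so along every unit direction `v`
its second derivative is at least `v_N² (W³ - W)`. As `0 ≤ W < 1`, Bessel's inequality
`∑ᵢ (vᵢ)_N² ≤ 1` bounds the sum over any orthonormal `k`-frame below by `W³ - W`.

For the supersolution property only coordinate frames are needed. Since `ũ` does not depend on
`x_j` for `j ≠ N`, each such direction gives `∂ⱼⱼφ ≤ 0`. Where `ũ = 0` (this includes the two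
kinks) `k ≤ N - 1` of these directions suffice; elsewhere `ũ` is locally a smooth solution `W`,
and the direction `e_N` adds `∂_NN φ ≤ W³ - W`.
-/

open Real Filter Set Topology Matrix

namespace Real

theorem hasDerivAt_tanh (x : ℝ) : HasDerivAt tanh (1 - tanh x ^ 2) x := by
  have h := (hasDerivAt_sinh x).div (hasDerivAt_cosh x) (cosh_pos x).ne'
  rw [show sinh / cosh = tanh from funext fun y => (tanh_eq_sinh_div_cosh y).symm] at h
  refine h.congr_deriv ?_
  rw [tanh_eq_sinh_div_cosh]
  field_simp

@[fun_prop]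
theorem continuous_tanh : Continuous tanh :=
  continuous_iff_continuousAt.2 fun x => (hasDerivAt_tanh x).continuousAt

theorem tanh_nonneg_iff {x : ℝ} : 0 ≤ tanh x ↔ 0 ≤ x := by
  rw [tanh_eq_sinh_div_cosh, le_div_iff₀ (cosh_pos x), zero_mul, sinh_nonneg_iff]

theorem tanh_eq_one_sub_inv (x : ℝ) : tanh x = 1 - 2 * (exp (2 * x) + 1)⁻¹ := by
  rw [tanh_eq, show 2 * x = x + x by ring, exp_add, exp_neg]
  field_simp
  ring

theorem tendsto_tanh_atTop : Tendsto tanh atTop (𝓝 1) := by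
  have h : Tendsto (fun x : ℝ => exp (2 * x) + 1) atTop atTop :=
    tendsto_atTop_add_const_right _ 1
      (tendsto_exp_atTop.comp (tendsto_id.const_mul_atTop two_pos))
  simpa [← tanh_eq_one_sub_inv] using
    (tendsto_inv_atTop_zero.comp h).const_mul 2 |>.const_sub 1

end Real

def IsAllenCahnSolution (W : ℝ → ℝ) : Prop :=
  ∃ V : ℝ → ℝ, ∀ t, HasDerivAt W (V t) t ∧ HasDerivAt V (W t ^ 3 - W t) t

namespace IsAllenCahnSolution

theorem zero : IsAllenCahnSolution fun _ => 0 :=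
  ⟨fun _ => 0, fun t => ⟨hasDerivAt_const t 0, by simpa using hasDerivAt_const t (0 : ℝ)⟩⟩

theorem tanh_div_sqrt_two : IsAllenCahnSolution fun t => tanh (t / √2) := by
  have hs : √2 ^ 2 = 2 := sq_sqrt zero_le_two
  have hT : ∀ t, HasDerivAt (fun t => tanh (t / √2)) ((1 - tanh (t / √2) ^ 2) / √2) t :=
    fun t => by
      have h := (hasDerivAt_tanh (t / √2)).comp t ((hasDerivAt_id t).div_const √2)
      exact h.congr_deriv (by ring)
  refine ⟨fun t => (1 - tanh (t / √2) ^ 2) / √2, fun t => ⟨hT t, ?_⟩⟩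
  refine ((((hT t).pow 2).const_sub 1).div_const √2).congr_deriv ?_
  field_simp
  linear_combination (tanh (t / √2) - tanh (t / √2) ^ 3) * hs

theorem comp_add_const {W : ℝ → ℝ} (hW : IsAllenCahnSolution W) (a : ℝ) :
    IsAllenCahnSolution fun t => W (t + a) := by
  obtain ⟨V, hV⟩ := hW
  exact ⟨fun t => V (t + a), fun t => ⟨(hV (t + a)).1.comp_add_const t a,
    (hV (t + a)).2.comp_add_const t a⟩⟩

theorem comp_sub_const {W : ℝ → ℝ} (hW : IsAllenCahnSolution W) (a : ℝ) :
    IsAllenCahnSolution fun t => W (t - a) := by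
  simpa only [sub_eq_add_neg] using hW.comp_add_const (-a)

theorem neg {W : ℝ → ℝ} (hW : IsAllenCahnSolution W) : IsAllenCahnSolution fun t => -W t := by
  obtain ⟨V, hV⟩ := hW
  exact ⟨fun t => -V t, fun t => ⟨(hV t).1.neg, ((hV t).2.neg).congr_deriv (by ring)⟩⟩

end IsAllenCahnSolution

theorem not_monotone_of_tendsto_atBot {α β : Type*} [LinearOrder α] [TopologicalSpace β]
    [Preorder β] [ClosedIicTopology β] {f : α → β} {L : β} (hf : Tendsto f atBot (𝓝 L)) {a : α}
    (ha : f a < L) : ¬Monotone f := fun hmono =>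
  haveI : Nonempty α := ⟨a⟩
  (le_of_tendsto hf (eventually_le_atBot a |>.mono fun _ ht => hmono ht)).not_gt ha

theorem not_antitone_of_tendsto_atTop {α β : Type*} [LinearOrder α] [TopologicalSpace β]
    [Preorder β] [ClosedIicTopology β] {f : α → β} {L : β} (hf : Tendsto f atTop (𝓝 L)) {a : α}
    (ha : f a < L) : ¬Antitone f := fun hanti =>
  haveI : Nonempty α := ⟨a⟩
  (le_of_tendsto hf (eventually_ge_atTop a |>.mono fun _ ht => hanti ht)).not_gt ha

noncomputable def doubleKink (c t : ℝ) : ℝ :=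
  if c ≤ t then tanh ((t - c) / √2) else if t ≤ -c then -tanh ((t + c) / √2) else 0

section doubleKink

variable {c : ℝ}

theorem doubleKink_self : doubleKink c c = 0 := by
  simp [doubleKink]

theorem doubleKink_lt_one (t : ℝ) : doubleKink c t < 1 := by
  unfold doubleKink
  split_ifs
  · exact tanh_lt_one _
  · linarith [neg_one_lt_tanh ((t + c) / √2)]
  · exact one_pos

variable (hc : 0 ≤ c)
include hc

theorem doubleKink_eq_max (t : ℝ) :
    doubleKink c t = max (max (tanh ((t - c) / √2)) (-tanh ((t + c) / √2))) 0 := by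
  have hs : (0 : ℝ) < √2 := by positivity
  unfold doubleKink
  have hsign : ∀ x, 0 ≤ x → 0 ≤ tanh (x / √2) := fun x hx =>
    tanh_nonneg_iff.2 (div_nonneg hx hs.le)
  split_ifs with h₁ h₂
  · have := hsign (t - c) (by linarith)
    have := hsign (t + c) (by linarith)
    simp only [max_def]; split_ifs <;> linarith
  · have := hsign (-(t - c)) (by linarith)
    have := hsign (-(t + c)) (by linarith)
    simp only [neg_div, tanh_neg] at *
    simp only [max_def]; split_ifs <;> linarith
  · have := hsign (-(t - c)) (by linarith)
    have := hsign (t + c) (by linarith)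
    simp only [neg_div, tanh_neg] at *
    simp only [max_def]; split_ifs <;> linarith

theorem continuous_doubleKink : Continuous (doubleKink c) := by
  rw [funext (doubleKink_eq_max hc)]
  fun_prop

theorem doubleKink_nonneg (t : ℝ) : 0 ≤ doubleKink c t := by
  rw [doubleKink_eq_max hc]
  exact le_max_right _ _

theorem tanh_le_doubleKink (t : ℝ) : tanh ((t - c) / √2) ≤ doubleKink c t := by
  rw [doubleKink_eq_max hc]
  exact (le_max_left _ _).trans (le_max_left _ _)

theorem neg_tanh_le_doubleKink (t : ℝ) : -tanh ((t + c) / √2) ≤ doubleKink c t := by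
  rw [doubleKink_eq_max hc]
  exact (le_max_right _ _).trans (le_max_left _ _)

theorem tendsto_doubleKink_atTop : Tendsto (doubleKink c) atTop (𝓝 1) :=
  tendsto_of_tendsto_of_tendsto_of_le_of_le (tendsto_tanh_atTop.comp
      ((tendsto_atTop_add_const_right _ (-c) tendsto_id).atTop_div_const (by positivity)))
    tendsto_const_nhds (tanh_le_doubleKink hc) fun t => (doubleKink_lt_one t).le

theorem tendsto_doubleKink_atBot : Tendsto (doubleKink c) atBot (𝓝 1) := by
  have h : Tendsto (fun t : ℝ => -((t + c) / √2)) atBot atTop := tendsto_neg_atBot_atTop.comp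
    ((tendsto_atBot_add_const_right _ c tendsto_id).atBot_div_const (by positivity))
  refine tendsto_of_tendsto_of_tendsto_of_le_of_le ?_ tendsto_const_nhds
    (neg_tanh_le_doubleKink hc) fun t => (doubleKink_lt_one t).le
  simpa only [Function.comp_def, tanh_neg] using tendsto_tanh_atTop.comp h

theorem exists_solution_le_doubleKink (t : ℝ) :
    ∃ W, IsAllenCahnSolution W ∧ W ≤ doubleKink c ∧ W t = doubleKink c t := by
  have h := doubleKink_eq_max hc t
  rcases max_choice (max (tanh ((t - c) / √2)) (-tanh ((t + c) / √2))) 0 with h₁ | h₁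
  · rcases max_choice (tanh ((t - c) / √2)) (-tanh ((t + c) / √2)) with h₂ | h₂
    · exact ⟨_, IsAllenCahnSolution.tanh_div_sqrt_two.comp_sub_const c, tanh_le_doubleKink hc,
        by rw [h, h₁, h₂]⟩
    · exact ⟨_, (IsAllenCahnSolution.tanh_div_sqrt_two.comp_add_const c).neg,
        neg_tanh_le_doubleKink hc, by rw [h, h₁, h₂]⟩
  · exact ⟨_, .zero, doubleKink_nonneg hc, by rw [h, h₁]⟩

theorem doubleKink_eq_zero_or_eventuallyEq (t : ℝ) :
    doubleKink c t = 0 ∨ ∃ W, IsAllenCahnSolution W ∧ doubleKink c =ᶠ[𝓝 t] W := by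
  rcases lt_or_ge c t with h | h
  · refine .inr ⟨_, IsAllenCahnSolution.tanh_div_sqrt_two.comp_sub_const c, ?_⟩
    filter_upwards [eventually_gt_nhds h] with s hs
    simp [doubleKink, hs.le]
  rcases lt_or_ge t (-c) with h' | h'
  · refine .inr ⟨_, (IsAllenCahnSolution.tanh_div_sqrt_two.comp_add_const c).neg, ?_⟩
    filter_upwards [eventually_lt_nhds h'] with s hs
    simp [doubleKink, hs.le, show ¬ c ≤ s by linarith]
  · left
    unfold doubleKink
    split_ifs with h₁ h₂
    · simp [le_antisymm h h₁]
    · simp [le_antisymm h₂ h']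
    · rfl

end doubleKink

section truncLap

theorem sum_sq_apply_le_one_of_orthonormal {ι n : Type*} [Fintype ι] [Fintype n]
    [DecidableEq ι] [DecidableEq n] {v : ι → n → ℝ}
    (hv : ∀ i j, v i ⬝ᵥ v j = if i = j then 1 else 0) (l : n) : ∑ i, v i l ^ 2 ≤ 1 := by
  have hON : Orthonormal ℝ fun i => WithLp.toLp 2 (v i) :=
    orthonormal_iff_ite.2 fun i j => by
      simpa [EuclideanSpace.inner_toLp_toLp, dotProduct_comm] using hv i j
  simpa [EuclideanSpace.inner_single_right] using
    hON.sum_inner_products_le (EuclideanSpace.single l (1 : ℝ)) (s := Finset.univ)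

theorem Matrix.neg_sum_abs_le_dotProduct_mulVec {n : Type*} [Fintype n]
    (X : Matrix n n ℝ) {x : n → ℝ} (hx : x ⬝ᵥ x = 1) :
    -∑ i, ∑ j, |X i j| ≤ (X *ᵥ x) ⬝ᵥ x := by
  have hcoord : ∀ i, |x i| ≤ 1 := fun i => abs_le_one_iff_mul_self_le_one.2 <|
    hx ▸ Finset.single_le_sum (f := fun j => x j * x j) (fun j _ => mul_self_nonneg _)
      (Finset.mem_univ i)
  have hexpand : (X *ᵥ x) ⬝ᵥ x = ∑ i, ∑ j, X i j * (x j * x i) := by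
    simp only [dotProduct, mulVec, Finset.sum_mul, mul_assoc]
  rw [hexpand, ← Finset.sum_neg_distrib]
  refine Finset.sum_le_sum fun i _ => ?_
  rw [← Finset.sum_neg_distrib]
  refine Finset.sum_le_sum fun j _ => (abs_le.1 ?_).1
  rw [abs_mul, abs_mul]
  exact mul_le_of_le_one_right (abs_nonneg _)
    (mul_le_one₀ (hcoord j) (abs_nonneg _) (hcoord i))

variable {N k : ℕ}

theorem truncLap_le (X : Matrix (Fin N) (Fin N) ℝ) (v : Fin k → Fin N → ℝ)
    (hv : ∀ i j, v i ⬝ᵥ v j = if i = j then 1 else 0) :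
    truncLap k X ≤ ∑ i, (X *ᵥ v i) ⬝ᵥ v i := by
  refine csInf_le ⟨∑ _i : Fin k, -∑ i, ∑ j, |X i j|, ?_⟩ ⟨v, hv, rfl⟩
  rintro s ⟨w, hw, rfl⟩
  exact Finset.sum_le_sum fun i _ => X.neg_sum_abs_le_dotProduct_mulVec (by simpa using hw i i)

theorem exists_orthonormal_single {S : Finset (Fin N)} (hS : S.card = k) :
    ∃ v : Fin k → Fin N → ℝ, (∀ i j, v i ⬝ᵥ v j = if i = j then 1 else 0) ∧
      ∀ X : Matrix (Fin N) (Fin N) ℝ, ∑ i, (X *ᵥ v i) ⬝ᵥ v i = ∑ j ∈ S, X j j := by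
  set e := S.orderIsoOfFin hS
  refine ⟨fun i => Pi.single (e i : Fin N) 1, fun i j => ?_, fun X => ?_⟩
  · simp [dotProduct_single, Pi.single_apply, Subtype.ext_iff.symm.trans e.injective.eq_iff,
      eq_comm]
  · simp only [mulVec_single, MulOpposite.op_one, one_smul, dotProduct_single, col_apply, mul_one]
    rw [← Finset.sum_coe_sort S, ← e.toEquiv.sum_comp]
    rfl

theorem truncLap_le_sum_diag (X : Matrix (Fin N) (Fin N) ℝ) {S : Finset (Fin N)}
    (hS : S.card = k) : truncLap k X ≤ ∑ j ∈ S, X j j := by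
  obtain ⟨v, hv, hsum⟩ := exists_orthonormal_single hS
  exact hsum X ▸ truncLap_le X v hv

theorem le_truncLap (hk : k ≤ N) (X : Matrix (Fin N) (Fin N) ℝ) {b : ℝ}
    (hb : ∀ v : Fin k → Fin N → ℝ, (∀ i j, v i ⬝ᵥ v j = if i = j then 1 else 0) →
      b ≤ ∑ i, (X *ᵥ v i) ⬝ᵥ v i) : b ≤ truncLap k X := by
  obtain ⟨S, -, hS⟩ := Finset.exists_subset_card_eq (s := (Finset.univ : Finset (Fin N))) (n := k)
    (by rwa [Finset.card_univ, Fintype.card_fin])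
  obtain ⟨v, hv, -⟩ := exists_orthonormal_single hS
  refine le_csInf ⟨_, v, hv, rfl⟩ ?_
  rintro s ⟨w, hw, rfl⟩
  exact hb w hw

end truncLap

theorem IsLocalMax.second_deriv_nonpos {g g' : ℝ → ℝ} {a q : ℝ} (h : IsLocalMax g a)
    (hg : ∀ᶠ s in 𝓝 a, HasDerivAt g (g' s) s) (hg' : HasDerivAt g' q a) : q ≤ 0 := by
  -- if `q > 0`, the second derivative test makes `a` a local minimum as well, so `g` is locally
  -- constant near `a` and `q = 0`
  by_contra! hq
  have hd : deriv g =ᶠ[𝓝 a] g' := hg.mono fun s hs => hs.deriv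
  have hmin : IsLocalMin g a := isLocalMin_of_deriv_deriv_pos
    (by rwa [hd.deriv_eq, hg'.deriv]) h.deriv_eq_zero hg.self_of_nhds.continuousAt
  have hconst : g =ᶠ[𝓝 a] fun _ => g a := (h.and hmin).mono fun s hs => le_antisymm hs.1 hs.2
  have hzero : g' =ᶠ[𝓝 a] fun _ => 0 := hd.symm.trans (hconst.deriv.trans (by simp))
  exact hq.ne' ((hg'.congr_of_eventuallyEq hzero.symm).unique (hasDerivAt_const a 0))

theorem IsLocalMin.second_deriv_nonneg {g g' : ℝ → ℝ} {a q : ℝ} (h : IsLocalMin g a)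
    (hg : ∀ᶠ s in 𝓝 a, HasDerivAt g (g' s) s) (hg' : HasDerivAt g' q a) : 0 ≤ q :=
  neg_nonpos.1 <| h.neg.second_deriv_nonpos (hg.mono fun _ hs => hs.neg) hg'.neg

section lines

variable {E : Type*} [NormedAddCommGroup E] [NormedSpace ℝ E] {φ : E → ℝ}

theorem IsLocalMax.comp_line {f : E → ℝ} {x : E} (h : IsLocalMax f x) (v : E) :
    IsLocalMax (fun s : ℝ => f (x + s • v)) 0 :=
  IsLocalMax.comp_continuous (g := fun s : ℝ => x + s • v) (by simpa using h) (by fun_prop)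

theorem IsLocalMin.comp_line {f : E → ℝ} {x : E} (h : IsLocalMin f x) (v : E) :
    IsLocalMin (fun s : ℝ => f (x + s • v)) 0 :=
  IsLocalMin.comp_continuous (g := fun s : ℝ => x + s • v) (by simpa using h) (by fun_prop)

theorem hasDerivAt_line (x v : E) (s : ℝ) : HasDerivAt (fun s : ℝ => x + s • v) v s := by
  simpa using ((hasDerivAt_id s).smul_const v).const_add x

theorem hasDerivAt_comp_line (hφ : Differentiable ℝ φ) (x v : E) (s : ℝ) :
    HasDerivAt (fun s : ℝ => φ (x + s • v)) (fderiv ℝ φ (x + s • v) v) s :=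
  (hφ _).hasFDerivAt.comp_hasDerivAt s (hasDerivAt_line x v s)

theorem hasDerivAt_fderiv_comp_line (hφ : ContDiff ℝ 2 φ) (x v : E) :
    HasDerivAt (fun s : ℝ => fderiv ℝ φ (x + s • v) v) (fderiv ℝ (fderiv ℝ φ) x v v) 0 := by
  have hD : HasFDerivAt (fderiv ℝ φ) (fderiv ℝ (fderiv ℝ φ) x) (x + (0 : ℝ) • v) := by
    simpa using ((hφ.fderiv_right (m := 1) (by norm_num)).differentiable one_ne_zero x).hasFDerivAt
  have h1 : HasDerivAt (fun s : ℝ => fderiv ℝ φ (x + s • v)) (fderiv ℝ (fderiv ℝ φ) x v) 0 :=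
    hD.comp_hasDerivAt (0 : ℝ) (hasDerivAt_line x v 0)
  simpa using h1.clm_apply (hasDerivAt_const (0 : ℝ) v)

end lines

section hess

variable {N : ℕ}

theorem hess_mulVec_dotProduct (φ : EuclideanSpace ℝ (Fin N) → ℝ) (x : EuclideanSpace ℝ (Fin N))
    (v : Fin N → ℝ) :
    (hess φ x *ᵥ v) ⬝ᵥ v = fderiv ℝ (fderiv ℝ φ) x (WithLp.toLp 2 v) (WithLp.toLp 2 v) := by
  have hv : WithLp.toLp 2 v = ∑ i, v i • EuclideanSpace.single i (1 : ℝ) := by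
    ext j
    simp [Pi.single_apply]
  rw [hv]
  simp only [dotProduct, mulVec, hess, iteratedFDeriv_two_apply, Fin.isValue, cons_val_zero,
    cons_val_one, cons_val_fin_one, Finset.sum_mul, map_sum, map_smul,
    _root_.sum_apply, _root_.smul_apply, smul_eq_mul, Finset.mul_sum]
  rw [Finset.sum_comm]
  exact Finset.sum_congr rfl fun _ _ => Finset.sum_congr rfl fun _ _ => by ring

variable {φ : EuclideanSpace ℝ (Fin N) → ℝ} {x : EuclideanSpace ℝ (Fin N)} {v : Fin N → ℝ}
  {ψ ψ' : ℝ → ℝ} {q : ℝ}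

theorem le_hess_mulVec_dotProduct_of_isLocalMax (hφ : ContDiff ℝ 2 φ)
    (hψ : ∀ᶠ s in 𝓝 0, HasDerivAt ψ (ψ' s) s) (hψ' : HasDerivAt ψ' q 0)
    (hmax : IsLocalMax (fun s => ψ s - φ (x + s • WithLp.toLp 2 v)) 0) :
    q ≤ (hess φ x *ᵥ v) ⬝ᵥ v := by
  have hφ' := hφ.differentiable two_ne_zero
  have := hmax.second_deriv_nonpos (hψ.mono fun s hs => hs.sub (hasDerivAt_comp_line hφ' _ _ s))
    (hψ'.sub (hasDerivAt_fderiv_comp_line hφ _ _))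
  rw [hess_mulVec_dotProduct]
  linarith

theorem hess_mulVec_dotProduct_le_of_isLocalMin (hφ : ContDiff ℝ 2 φ)
    (hψ : ∀ᶠ s in 𝓝 0, HasDerivAt ψ (ψ' s) s) (hψ' : HasDerivAt ψ' q 0)
    (hmin : IsLocalMin (fun s => ψ s - φ (x + s • WithLp.toLp 2 v)) 0) :
    (hess φ x *ᵥ v) ⬝ᵥ v ≤ q := by
  have hφ' := hφ.differentiable two_ne_zero
  have := hmin.second_deriv_nonneg (hψ.mono fun s hs => hs.sub (hasDerivAt_comp_line hφ' _ _ s))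
    (hψ'.sub (hasDerivAt_fderiv_comp_line hφ _ _))
  rw [hess_mulVec_dotProduct]
  linarith

end hess

namespace IsAllenCahnSolution

variable {W : ℝ → ℝ} (hW : IsAllenCahnSolution W)
include hW

theorem exists_hasDerivAt_comp_affine (a b : ℝ) :
    ∃ ψ' : ℝ → ℝ, (∀ s, HasDerivAt (fun s => W (a + s * b)) (ψ' s) s) ∧
      HasDerivAt ψ' (b ^ 2 * (W a ^ 3 - W a)) 0 := by
  obtain ⟨V, hV⟩ := hW
  have hline : ∀ s : ℝ, HasDerivAt (fun s => a + s * b) b s := fun s => by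
    simpa using ((hasDerivAt_id s).mul_const b).const_add a
  refine ⟨fun s => V (a + s * b) * b, fun s => (hV _).1.comp s (hline s), ?_⟩
  exact (((hV _).2.comp 0 (hline 0)).mul_const b).congr_deriv (by simp; ring)

variable {N : ℕ} {φ : EuclideanSpace ℝ (Fin N) → ℝ} {x : EuclideanSpace ℝ (Fin N)}

theorem le_hess_mulVec_dotProduct (hφ : ContDiff ℝ 2 φ) {ℓ : Fin N}
    (hmax : IsLocalMax (fun y => W (y ℓ) - φ y) x) (v : Fin N → ℝ) :
    v ℓ ^ 2 * (W (x ℓ) ^ 3 - W (x ℓ)) ≤ (hess φ x *ᵥ v) ⬝ᵥ v := by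
  obtain ⟨ψ', hψ, hψ'⟩ := hW.exists_hasDerivAt_comp_affine (x ℓ) (v ℓ)
  exact le_hess_mulVec_dotProduct_of_isLocalMax hφ (.of_forall hψ) hψ'
    (hmax.comp_line (WithLp.toLp 2 v))

theorem hess_mulVec_dotProduct_le (hφ : ContDiff ℝ 2 φ) {ℓ : Fin N}
    (hmin : IsLocalMin (fun y => W (y ℓ) - φ y) x) (v : Fin N → ℝ) :
    (hess φ x *ᵥ v) ⬝ᵥ v ≤ v ℓ ^ 2 * (W (x ℓ) ^ 3 - W (x ℓ)) := by
  obtain ⟨ψ', hψ, hψ'⟩ := hW.exists_hasDerivAt_comp_affine (x ℓ) (v ℓ)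
  exact hess_mulVec_dotProduct_le_of_isLocalMin hφ (.of_forall hψ) hψ'
    (hmin.comp_line (WithLp.toLp 2 v))

end IsAllenCahnSolution

section viscosity

variable {N k : ℕ} {w : ℝ → ℝ}

theorem isViscSubsol_comp_apply (hk : k ≤ N) (ℓ : Fin N) (hw : ∀ t, 0 ≤ w t ∧ w t ≤ 1)
    (hsol : ∀ t, ∃ W, IsAllenCahnSolution W ∧ W ≤ᶠ[𝓝 t] w ∧ W t = w t) :
    IsViscSubsol k (fun s => s - s ^ 3) fun x : EuclideanSpace ℝ (Fin N) => w (x ℓ) := by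
  intro φ hφ x hmax
  obtain ⟨W, hW, hle, heq⟩ := hsol (x ℓ)
  have hcont : Continuous fun y : EuclideanSpace ℝ (Fin N) => y ℓ := by fun_prop
  have hmaxW : IsLocalMax (fun y => W (y ℓ) - φ y) x := by
    filter_upwards [hmax, (hcont.tendsto x).eventually hle] with y hy hWy
    linarith
  have hneg : W (x ℓ) ^ 3 - W (x ℓ) ≤ 0 := by
    obtain ⟨h0, h1⟩ := hw (x ℓ)
    rw [heq]
    nlinarith [mul_nonneg (mul_nonneg h0 (sub_nonneg.2 h1)) (by linarith : 0 ≤ 1 + w (x ℓ))]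
  have hbound : W (x ℓ) ^ 3 - W (x ℓ) ≤ truncLap k (hess φ x) := le_truncLap hk _ fun v hv =>
    calc W (x ℓ) ^ 3 - W (x ℓ)
        ≤ ∑ i, v i ℓ ^ 2 * (W (x ℓ) ^ 3 - W (x ℓ)) := by
          rw [← Finset.sum_mul]
          nlinarith [sum_sq_apply_le_one_of_orthonormal hv ℓ]
      _ ≤ ∑ i, (hess φ x *ᵥ v i) ⬝ᵥ v i :=
          Finset.sum_le_sum fun i _ => hW.le_hess_mulVec_dotProduct hφ hmaxW (v i)
  change 0 ≤ truncLap k (hess φ x) + (w (x ℓ) - w (x ℓ) ^ 3)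
  rw [← heq]
  linarith

theorem hess_diag_nonpos_of_isLocalMin {φ : EuclideanSpace ℝ (Fin N) → ℝ}
    {x : EuclideanSpace ℝ (Fin N)} (hφ : ContDiff ℝ 2 φ) {ℓ j : Fin N} (hj : j ≠ ℓ)
    (hmin : IsLocalMin (fun y => w (y ℓ) - φ y) x) : hess φ x j j ≤ 0 := by
  have hline :
      IsLocalMin (fun s : ℝ => w (x ℓ) - φ (x + s • WithLp.toLp 2 (Pi.single j 1))) 0 := by
    refine (hmin.comp_line (WithLp.toLp 2 (Pi.single j 1))).congr (.of_forall fun s => ?_)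
    change w (x ℓ + s * (Pi.single j 1 : Fin N → ℝ) ℓ) - _ = _
    rw [Pi.single_eq_of_ne hj.symm, mul_zero, add_zero]
  have := hess_mulVec_dotProduct_le_of_isLocalMin (ψ := fun _ => w (x ℓ)) (ψ' := fun _ => 0) hφ
    (.of_forall fun s => hasDerivAt_const s _) (hasDerivAt_const 0 0) hline
  simpa [mulVec_single, dotProduct_single] using this

theorem isViscSupersol_comp_apply (hk₁ : 1 ≤ k) (hkN : k < N) (ℓ : Fin N)
    (hsol : ∀ t, w t = 0 ∨ ∃ W, IsAllenCahnSolution W ∧ w =ᶠ[𝓝 t] W) :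
    IsViscSupersol k (fun s => s - s ^ 3) fun x : EuclideanSpace ℝ (Fin N) => w (x ℓ) := by
  intro φ hφ x hmin
  have hcard : (Finset.univ.erase ℓ).card = N - 1 := by simp
  change truncLap k (hess φ x) + (w (x ℓ) - w (x ℓ) ^ 3) ≤ 0
  rcases hsol (x ℓ) with h0 | ⟨W, hW, heq⟩
  · obtain ⟨S, hSℓ, hS⟩ := Finset.exists_subset_card_eq (s := Finset.univ.erase ℓ) (n := k)
      (by rw [hcard]; omega)
    have hdiag : ∑ j ∈ S, hess φ x j j ≤ 0 := Finset.sum_nonpos fun j hj =>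
      hess_diag_nonpos_of_isLocalMin hφ (Finset.ne_of_mem_erase (hSℓ hj)) hmin
    have := truncLap_le_sum_diag (hess φ x) hS
    rw [h0]
    linarith
  · obtain ⟨T, hTℓ, hT⟩ := Finset.exists_subset_card_eq (s := Finset.univ.erase ℓ) (n := k - 1)
      (by rw [hcard]; omega)
    have hdiag : ∑ j ∈ T, hess φ x j j ≤ 0 := Finset.sum_nonpos fun j hj =>
      hess_diag_nonpos_of_isLocalMin hφ (Finset.ne_of_mem_erase (hTℓ hj)) hmin
    have hℓT : ℓ ∉ T := fun h => Finset.ne_of_mem_erase (hTℓ h) rfl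
    have hcont : Continuous fun y : EuclideanSpace ℝ (Fin N) => y ℓ := by fun_prop
    have hminW : IsLocalMin (fun y => W (y ℓ) - φ y) x :=
      hmin.congr (((hcont.tendsto x).eventually heq).mono fun y hy => by simp only [hy])
    have hℓ : hess φ x ℓ ℓ ≤ W (x ℓ) ^ 3 - W (x ℓ) := by
      simpa [mulVec_single, dotProduct_single] using
        hW.hess_mulVec_dotProduct_le hφ hminW (Pi.single ℓ 1)
    have := truncLap_le_sum_diag (k := k) (hess φ x) (S := insert ℓ T)
      (by rw [Finset.card_insert_of_notMem hℓT, hT]; omega)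
    rw [Finset.sum_insert hℓT] at this
    rw [heq.self_of_nhds]
    linarith

end viscosity

/-- for `c ≥ 0`, the one-dimensional function equal to `tanh((x_N-c)/√2)`
for `x_N ≥ c`, `0` for `|x_N| < c` and `-tanh((x_N+c)/√2)` for `x_N ≤ -c` is continuous,
satisfies `|ũ| < 1`, is a viscosity solution of `P⁻ₖ(D²u) + u - u³ = 0` in `ℝ^N`, its
profile tends to `1` at both `+∞` and `-∞`, and in particular it is not monotone in the
`x_N`-direction. -/
theorem stmt4 {n : ℕ} (k : ℕ) (hk1 : 1 ≤ k) (hk2 : k ≤ n + 1)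
    (c : ℝ) (hc : 0 ≤ c) (w : ℝ → ℝ)
    (hw : ∀ t : ℝ, w t =
      if c ≤ t then Real.tanh ((t - c) / Real.sqrt 2)
      else if t ≤ -c then -Real.tanh ((t + c) / Real.sqrt 2)
      else 0)
    (u : EuclideanSpace ℝ (Fin (n + 2)) → ℝ)
    (hu : ∀ x, u x = w (x (Fin.last (n + 1)))) :
    Continuous u ∧ (∀ x, |u x| < 1) ∧
    IsViscSubsol k (fun s => s - s ^ 3) u ∧
    IsViscSupersol k (fun s => s - s ^ 3) u ∧
    Filter.Tendsto w Filter.atTop (nhds 1) ∧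
    Filter.Tendsto w Filter.atBot (nhds 1) ∧
    ¬ Monotone w ∧ ¬ Antitone w := by
  obtain rfl : w = doubleKink c := funext hw
  obtain rfl : u = fun x => doubleKink c (x (Fin.last (n + 1))) := funext hu
  have hbounds : ∀ t, 0 ≤ doubleKink c t ∧ doubleKink c t ≤ 1 :=
    fun t => ⟨doubleKink_nonneg hc t, (doubleKink_lt_one t).le⟩
  have hsub : ∀ t, ∃ W, IsAllenCahnSolution W ∧ W ≤ᶠ[𝓝 t] doubleKink c ∧ W t = doubleKink c t :=
    fun t => by
      obtain ⟨W, hW, hle, heq⟩ := exists_solution_le_doubleKink hc t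
      exact ⟨W, hW, .of_forall hle, heq⟩
  have hzero : doubleKink c c < 1 := doubleKink_self.trans_lt one_pos
  exact ⟨(continuous_doubleKink hc).comp (by fun_prop),
    fun x => abs_lt.2 ⟨by linarith [(hbounds (x (Fin.last (n + 1)))).1], doubleKink_lt_one _⟩,
    isViscSubsol_comp_apply (by omega) _ hbounds hsub,
    isViscSupersol_comp_apply hk1 (by omega) _ (doubleKink_eq_zero_or_eventuallyEq hc),
    tendsto_doubleKink_atTop hc, tendsto_doubleKink_atBot hc,
    not_monotone_of_tendsto_atBot (tendsto_doubleKink_atBot hc) hzero,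
    not_antitone_of_tendsto_atTop (tendsto_doubleKink_atTop hc) hzero⟩
end

section
/- Let N ≥ 2 and 1 ≤ k ≤ N−1. There is no lower semicontinuous one-dimensional function u : ℝ^N → ℝ (i.e. u(x) = v(x_N) for some v : ℝ → ℝ) with 0 < u(x) < 1 for all x ∈ ℝ^N that is a viscosity supersolution of P⁻_k(D²u) + u − u³ = 0 in ℝ^N. -/
open Set

theorem LowerSemicontinuousOn.exists_isLocalMin_mem_Ioo {α β : Type*} [TopologicalSpace α] [LinearOrder α]
    [OrderTopology α] [CompactIccSpace α] [LinearOrder β] {g : α → β} {a b c : α}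
    (hg : LowerSemicontinuousOn g (Icc a b)) (hc : c ∈ Icc a b) (hca : g c < g a)
    (hcb : g c < g b) : ∃ t ∈ Ioo a b, IsLocalMin g t := by
  obtain ⟨t, ht, hmin⟩ := hg.exists_isMinOn ⟨c, hc⟩ isCompact_Icc
  have hta : t ≠ a := by rintro rfl; exact (hmin hc).not_gt hca
  have htb : t ≠ b := by rintro rfl; exact (hmin hc).not_gt hcb
  have ht' : t ∈ Ioo a b := ⟨lt_of_le_of_ne ht.1 hta.symm, lt_of_le_of_ne ht.2 htb⟩
  exact ⟨t, ht', hmin.isLocalMin (Icc_mem_nhds ht'.1 ht'.2)⟩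

section Concave

variable {𝕜 : Type*} [Field 𝕜] [LinearOrder 𝕜] [IsStrictOrderedRing 𝕜] {f : 𝕜 → 𝕜}

theorem ConcaveOn.antitone_of_bddBelow (hf : ConcaveOn 𝕜 univ f) (hb : BddBelow (range f)) :
    Antitone f := by
  intro x y hxy
  by_contra! hlt
  obtain ⟨c, hc⟩ := hb
  have hxy' : x < y := lt_of_le_of_ne hxy (by rintro rfl; exact hlt.false)
  have hyx : 0 < y - x := sub_pos.2 hxy'
  set m := (f y - f x) / (y - x)
  have hm : 0 < m := div_pos (sub_pos.2 hlt) hyx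
  -- far enough to the left, the secant slope `m` pushes `f` below its lower bound `c`
  set s := x - (f x - c) / m - 1
  have hsx : s < x := by
    have : c ≤ f x := hc (mem_range_self x)
    have : 0 ≤ (f x - c) / m := div_nonneg (by linarith) hm.le
    linarith
  have hslope : m ≤ (f x - f s) / (x - s) := hf.slope_anti_adjacent trivial trivial hsx hxy'
  rw [le_div_iff₀ (sub_pos.2 hsx)] at hslope
  have : x - s = (f x - c) / m + 1 := by ring
  rw [this, mul_add, mul_div_cancel₀ _ hm.ne', mul_one] at hslope
  linarith [hc (mem_range_self s)]

theorem ConcaveOn.eq_of_bddBelow (hf : ConcaveOn 𝕜 univ f) (hb : BddBelow (range f)) (x y : 𝕜) :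
    f x = f y := by
  have hneg : ConcaveOn 𝕜 univ (f ∘ Neg.neg) := by
    convert hf.comp_linearMap (-LinearMap.id) using 1
    · rfl
    · simp
    · ext; simp
  have hbneg : BddBelow (range (f ∘ Neg.neg)) := hb.mono (range_comp_subset_range _ _)
  have hmono : Monotone f := fun a b hab => by
    simpa using hneg.antitone_of_bddBelow hbneg (neg_le_neg hab)
  rcases le_total x y with h | h
  · exact le_antisymm (hmono h) (hf.antitone_of_bddBelow hb h)
  · exact le_antisymm (hf.antitone_of_bddBelow hb h) (hmono h)

end Concave

theorem LowerSemicontinuous.exists_isLocalMin_sub_affine_of_slope_lt {v : ℝ → ℝ} (hv : LowerSemicontinuous v)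
    {x y z : ℝ} (hxy : x < y) (hyz : y < z)
    (hslope : (v y - v x) / (y - x) < (v z - v y) / (z - y)) :
    ∃ β α t₀ : ℝ, IsLocalMin (fun t => v t - (β * t + α)) t₀ := by
  -- a line through `(y, v y)` with slope strictly between the two secant slopes
  obtain ⟨β, hβx, hβz⟩ := exists_between hslope
  set g : ℝ → ℝ := fun t => v t - (β * t + (v y - β * y))
  have hgx : g y < g x := by
    rw [div_lt_iff₀ (sub_pos.2 hxy)] at hβx
    simp only [g]; linarith
  have hgz : g y < g z := by
    rw [lt_div_iff₀ (sub_pos.2 hyz)] at hβz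
    simp only [g]; linarith
  have hg : LowerSemicontinuous g :=
    hv.add (by fun_prop : Continuous fun t => -(β * t + (v y - β * y))).lowerSemicontinuous
  obtain ⟨t₀, -, ht₀⟩ := (hg.lowerSemicontinuousOn _).exists_isLocalMin_mem_Ioo
    ⟨hxy.le, hyz.le⟩ hgx hgz
  exact ⟨β, v y - β * y, t₀, ht₀⟩

theorem LowerSemicontinuous.exists_isLocalMin_sub_affine {v : ℝ → ℝ} (hv : LowerSemicontinuous v)
    (hb : BddBelow (range v)) : ∃ β α t₀ : ℝ, IsLocalMin (fun t => v t - (β * t + α)) t₀ := by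
  by_cases hconc : ConcaveOn ℝ univ v
  · refine ⟨0, v 0, 0, Filter.Eventually.of_forall fun t => ?_⟩
    simp [hconc.eq_of_bddBelow hb t 0]
  · obtain ⟨x, y, z, -, -, hxy, hyz, hslope⟩ :
        ∃ x y z, x ∈ univ ∧ z ∈ univ ∧ x < y ∧ y < z ∧
          (v y - v x) / (y - x) < (v z - v y) / (z - y) := by
      simpa [concaveOn_iff_slope_anti_adjacent, convex_univ] using hconc
    exact hv.exists_isLocalMin_sub_affine_of_slope_lt hxy hyz hslope

theorem truncLap_zero {N k : ℕ} (hk : k ≤ N) : truncLap k (0 : Matrix (Fin N) (Fin N) ℝ) = 0 := by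
  have horth : ∃ v : Fin k → Fin N → ℝ, ∀ i j, v i ⬝ᵥ v j = if i = j then (1 : ℝ) else 0 :=
    ⟨fun i => Pi.single (Fin.castLE hk i) 1, fun i j => by
      simp [Pi.single_apply, Fin.castLE_inj, eq_comm]⟩
  rw [truncLap]
  conv_rhs => rw [← csInf_singleton (0 : ℝ)]
  congr 1
  ext s
  simp only [Matrix.zero_mulVec, zero_dotProduct, Finset.sum_const_zero, mem_ofPred_eq,
    mem_singleton_iff, exists_and_right, horth, true_and]

theorem hess_continuousLinearMap_add_const {N : ℕ} (L : EuclideanSpace ℝ (Fin N) →L[ℝ] ℝ)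
    (α : ℝ) (x : EuclideanSpace ℝ (Fin N)) : hess (fun y => L y + α) x = 0 := by
  have hd : fderiv ℝ (fun y => L y + α) = fun _ => L := by
    funext y
    rw [fderiv_add_const, ContinuousLinearMap.fderiv]
  funext i j
  simp [hess, iteratedFDeriv_two_apply, hd]

theorem IsViscSupersol.not_isLocalMin_sub_affine {N k : ℕ} {f : ℝ → ℝ}
    {u : EuclideanSpace ℝ (Fin N) → ℝ} (hu : IsViscSupersol k f u) (hk : k ≤ N)
    {x₀ : EuclideanSpace ℝ (Fin N)} (hf : 0 < f (u x₀)) (L : EuclideanSpace ℝ (Fin N) →L[ℝ] ℝ)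
    (α : ℝ) : ¬ IsLocalMin (fun x => u x - (L x + α)) x₀ := by
  intro hmin
  have := hu _ (L.contDiff.add contDiff_const) x₀ hmin
  rw [hess_continuousLinearMap_add_const, truncLap_zero hk, zero_add] at this
  exact this.not_gt hf

theorem stmt5_general {n : ℕ} (k : ℕ) (hk2 : k ≤ n + 1) :
    ¬ ∃ (u : EuclideanSpace ℝ (Fin (n + 2)) → ℝ) (v : ℝ → ℝ),
      LowerSemicontinuous u ∧
      (∀ x, u x = v (x (Fin.last (n + 1)))) ∧
      (∀ x, 0 < u x ∧ u x < 1) ∧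
      IsViscSupersol k (fun s => s - s ^ 3) u := by
  rintro ⟨u, v, hlsc, huv, hb, hsuper⟩
  set e : ℝ → EuclideanSpace ℝ (Fin (n + 2)) :=
    fun t => t • EuclideanSpace.single (Fin.last (n + 1)) 1
  set p : EuclideanSpace ℝ (Fin (n + 2)) →L[ℝ] ℝ := EuclideanSpace.proj (Fin.last (n + 1))
  have hve : v = u ∘ e := funext fun t => by simp [huv, e]
  have hvlsc : LowerSemicontinuous v := hve ▸ hlsc.comp (continuous_id.smul continuous_const)
  obtain ⟨β, α, t₀, hmin⟩ := hvlsc.exists_isLocalMin_sub_affine ⟨0, by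
    rintro _ ⟨t, rfl⟩; rw [hve]; exact (hb (e t)).1.le⟩
  obtain ⟨hu0, hu1⟩ := hb (e t₀)
  have hf : 0 < u (e t₀) - u (e t₀) ^ 3 := by
    nlinarith [mul_pos (mul_pos hu0 (sub_pos.2 hu1)) (by linarith : 0 < 1 + u (e t₀))]
  refine hsuper.not_isLocalMin_sub_affine (by omega) hf (β • p) α ?_
  have hpe : p (e t₀) = t₀ := by simp [p, e]
  rw [← hpe] at hmin
  simpa [Function.comp_def, huv, p] using hmin.comp_continuous p.continuous.continuousAt

/-- there is no LSC one-dimensional viscosity supersolution `u` of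
`P⁻ₖ(D²u) + u - u³ = 0` in `ℝ^N` with `0 < u < 1` everywhere. -/
theorem stmt5 {n : ℕ} (k : ℕ) (hk1 : 1 ≤ k) (hk2 : k ≤ n + 1) :
    ¬ ∃ (u : EuclideanSpace ℝ (Fin (n + 2)) → ℝ) (v : ℝ → ℝ),
      LowerSemicontinuous u ∧
      (∀ x, u x = v (x (Fin.last (n + 1)))) ∧
      (∀ x, 0 < u x ∧ u x < 1) ∧
      IsViscSupersol k (fun s => s - s ^ 3) u :=
  stmt5_general k hk2
end

section
/- Let v : ℝ → ℝ be lower semicontinuous and suppose that v satisfies v'' < 0 in the viscosity sense, i.e. for every t₀ ∈ ℝ and every C² function φ : ℝ → ℝ such that v − φ attains a local minimum at t₀, one has φ''(t₀) < 0. Then v is strictly concave: for all t₁ < t₂ and every t ∈ (t₁, t₂), v(t) > v(t₁) + ((v(t₂) − v(t₁))/(t₂ − t₁))·(t − t₁). In particular, there is no such v that is in addition positive on all of ℝ. -/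
/-!
Subtracting the chord `L` of `v` over `[t₁, t₂]` gives a lower semicontinuous function `v - L`
vanishing at both ends. It attains its minimum on `[t₁, t₂]`, and no interior point can be a
minimiser, for it would be a local minimum of `v - L` while `L'' = 0`, against the viscosity
inequality. Hence `v - L > 0` inside the interval.

A positive strictly concave function on `ℝ` cannot exist: if `v a ≠ v b`, the secant through
`(a, v a)` and `(b, v b)` becomes negative on one side of `[a, b]`, and `v` lies below it there.
So `v` is constant, which is not strictly concave.
-/

open Set

theorem LowerSemicontinuous.min_lt_of_forall_not_isLocalMin {g : ℝ → ℝ}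
    (hg : LowerSemicontinuous g) (hg_min : ∀ x, ¬ IsLocalMin g x) {a b t : ℝ}
    (hat : a < t) (htb : t < b) : min (g a) (g b) < g t := by
  have not_isMinOn : ∀ x ∈ Ioo a b, ¬ IsMinOn g (Icc a b) x := fun x hx h =>
    hg_min x (h.isLocalMin (Icc_mem_nhds hx.1 hx.2))
  obtain ⟨x₀, hx₀, hx₀_min⟩ := (hg.lowerSemicontinuousOn _).exists_isMinOn
    (nonempty_Icc.2 (hat.trans htb).le) isCompact_Icc
  have hx₀_end : x₀ = a ∨ x₀ = b := by
    by_contra! h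
    exact not_isMinOn x₀
      ⟨lt_of_le_of_ne hx₀.1 (Ne.symm h.1), lt_of_le_of_ne hx₀.2 h.2⟩ hx₀_min
  by_contra! ht
  have hmin_le : min (g a) (g b) ≤ g x₀ := by
    rcases hx₀_end with rfl | rfl
    exacts [min_le_left _ _, min_le_right _ _]
  exact not_isMinOn t ⟨hat, htb⟩ fun y hy => (ht.trans hmin_le).trans (hx₀_min hy)

section Viscosity

variable {v : ℝ → ℝ}

theorem not_isLocalMin_sub_affine_of_viscosity
    (hvisc : ∀ (t₀ : ℝ) (φ : ℝ → ℝ), ContDiff ℝ 2 φ →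
      IsLocalMin (fun t => v t - φ t) t₀ → deriv (deriv φ) t₀ < 0)
    (c m p x : ℝ) : ¬ IsLocalMin (fun t => v t - (c + m * (t - p))) x := by
  intro h
  have hφ'' : deriv (deriv fun t => c + m * (t - p)) x = 0 := by simp
  exact (hvisc x _ (by fun_prop) h).ne hφ''

theorem chord_lt_of_viscosity (hlsc : LowerSemicontinuous v)
    (hvisc : ∀ (t₀ : ℝ) (φ : ℝ → ℝ), ContDiff ℝ 2 φ →
      IsLocalMin (fun t => v t - φ t) t₀ → deriv (deriv φ) t₀ < 0)
    (t₁ t₂ t : ℝ) (h₁ : t₁ < t) (h₂ : t < t₂) :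
    v t₁ + (v t₂ - v t₁) / (t₂ - t₁) * (t - t₁) < v t := by
  set m := (v t₂ - v t₁) / (t₂ - t₁)
  set g : ℝ → ℝ := fun s => v s - (v t₁ + m * (s - t₁))
  have hg : LowerSemicontinuous g :=
    hlsc.add (continuous_const.add (continuous_const.mul
      (continuous_id.sub continuous_const))).neg.lowerSemicontinuous
  have hg₁ : g t₁ = 0 := by simp [g]
  have hg₂ : g t₂ = 0 := by
    simp only [g, m]
    field_simp [sub_ne_zero.2 (h₁.trans h₂).ne']
    ring
  have := hg.min_lt_of_forall_not_isLocalMin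
    (not_isLocalMin_sub_affine_of_viscosity hvisc (v t₁) m t₁) h₁ h₂
  simp only [hg₁, hg₂, min_self, g] at this
  linarith

end Viscosity

section Concave

variable {v : ℝ → ℝ}

theorem mul_chord_lt_of_chord_lt {t₁ t₂ t : ℝ} (h₁ : t₁ < t) (h₂ : t < t₂)
    (h : v t₁ + (v t₂ - v t₁) / (t₂ - t₁) * (t - t₁) < v t) :
    (t₂ - t) * v t₁ + (t - t₁) * v t₂ < (t₂ - t₁) * v t := by
  have h₁₂ : 0 < t₂ - t₁ := by linarith
  have h' := mul_lt_mul_of_pos_left h h₁₂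
  rw [mul_add, ← mul_assoc, mul_div_cancel₀ _ h₁₂.ne'] at h'
  linarith

theorem eq_of_mul_chord_lt_of_pos
    (hv : ∀ t₁ t₂ t, t₁ < t → t < t₂ →
      (t₂ - t) * v t₁ + (t - t₁) * v t₂ < (t₂ - t₁) * v t)
    (hpos : ∀ t, 0 < v t) {a b : ℝ} (hab : a < b) : v a = v b := by
  by_contra hne
  -- `c` is where the secant through `(a, v a)` and `(b, v b)` vanishes.
  set c := (b * v a - a * v b) / (v a - v b)
  rcases lt_or_gt_of_ne hne with hlt | hgt
  · set s := min (a - 1) c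
    have hsa : s < a := (min_le_left _ _).trans_lt (by linarith)
    have hsc : b * v a - a * v b ≤ s * (v a - v b) :=
      (le_div_iff_of_neg (sub_neg.2 hlt)).1 (min_le_right _ _)
    nlinarith [hv s b a hsa hab, mul_pos (sub_pos.2 hab) (hpos s)]
  · set s := max (b + 1) c
    have hbs : b < s := by linarith [le_max_left (b + 1) c]
    have hsc : b * v a - a * v b ≤ s * (v a - v b) :=
      (div_le_iff₀ (sub_pos.2 hgt)).1 (le_max_right _ _)
    nlinarith [hv a s b hab hbs, mul_pos (sub_pos.2 hab) (hpos s)]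

theorem not_forall_pos_of_chord_lt
    (hv : ∀ t₁ t₂ t : ℝ, t₁ < t → t < t₂ →
      v t₁ + (v t₂ - v t₁) / (t₂ - t₁) * (t - t₁) < v t) :
    ¬ ∀ t, 0 < v t := by
  intro hpos
  have hv' := fun t₁ t₂ t (h₁ : t₁ < t) (h₂ : t < t₂) =>
    mul_chord_lt_of_chord_lt h₁ h₂ (hv t₁ t₂ t h₁ h₂)
  have h := hv' 0 2 1 one_pos one_lt_two
  rw [eq_of_mul_chord_lt_of_pos hv' hpos one_pos,
    eq_of_mul_chord_lt_of_pos hv' hpos one_lt_two] at h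
  linarith

end Concave

/-- a lower semicontinuous `v : ℝ → ℝ` satisfying `v'' < 0` in the viscosity
sense is strictly concave (it lies strictly above its chords), and in particular no such
`v` can be positive on all of `ℝ`. -/
theorem stmt6 (v : ℝ → ℝ) (hlsc : LowerSemicontinuous v)
    (hvisc : ∀ (t₀ : ℝ) (φ : ℝ → ℝ), ContDiff ℝ 2 φ →
      IsLocalMin (fun t => v t - φ t) t₀ → deriv (deriv φ) t₀ < 0) :
    (∀ t₁ t₂ t : ℝ, t₁ < t → t < t₂ →
      v t₁ + (v t₂ - v t₁) / (t₂ - t₁) * (t - t₁) < v t) ∧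
    ¬ (∀ t : ℝ, 0 < v t) := by
  have hchord := chord_lt_of_viscosity hlsc hvisc
  exact ⟨hchord, not_forall_pos_of_chord_lt hchord⟩
end

section
/- Let N ≥ 2, 1 ≤ k ≤ N−1, and let f : ℝ → ℝ satisfy: there exists δ > 0 such that f is C¹ and nondecreasing on (−δ, δ), f(u) > 0 for all u ∈ (0, δ), and f(0) = 0. Then for every α ∈ (0, δ) there exists a positive, bounded, radial C² function u_α : ℝ^N → ℝ with u_α(0) = α, 0 < u_α(x) ≤ α for all x, u_α(x) → 0 as |x| → ∞, and P⁻_k(D²u_α(x)) + f(u_α(x)) = 0 for every x ∈ ℝ^N. In particular, the equation P⁻_k(D²u) + f(u) = 0 in ℝ^N admits infinitely many positive bounded radial classical solutions. -/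
/-! The solution is `u(x) = g(|x|²)` with `g' = -f(g)/(2k)` and `g(0) = α`. Then
`D²u(x) = 2g'(|x|²) I + 4g''(|x|²) x xᵀ`, and `g'' ≥ 0` because `g` decreases while `f` is
nondecreasing; so the `k ≤ N - 1` smallest eigenvalues of `D²u(x)` all equal `2g'(|x|²)`, and
`P⁻ₖ(D²u) = 2k g'(|x|²) = -f(u)`. The profile `g` is the inverse of `y ↦ 2k ∫_y^α dt / f(t)`.
Since `f` is differentiable at `0` with `f(0) = 0`, this integral diverges as `y → 0⁺`, so `g`
lives on all of `[0, ∞)` and decays to `0` there. The values `u(0) = α` tell the solutions apart. -/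

open Set Filter Topology Module

section TruncatedLaplacian

open Matrix

theorem exists_orthonormal_forall_inner_eq_zero {E : Type*} [NormedAddCommGroup E]
    [InnerProductSpace ℝ E] [FiniteDimensional ℝ E] {k : ℕ} (hk : k < finrank ℝ E) (x : E) :
    ∃ v : Fin k → E, Orthonormal ℝ v ∧ ∀ i, inner ℝ x (v i) = 0 := by
  have hW : k ≤ finrank ℝ (ℝ ∙ x)ᗮ := by
    have := (ℝ ∙ x).finrank_add_finrank_orthogonal
    have : finrank ℝ (ℝ ∙ x) ≤ 1 := by simpa using finrank_span_le_card (R := ℝ) {x}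
    omega
  refine ⟨fun i => (stdOrthonormalBasis ℝ (ℝ ∙ x)ᗮ (Fin.castLE hW i) : E), ?_, fun i => ?_⟩
  · exact ((stdOrthonormalBasis ℝ _).orthonormal.comp _
      (Fin.castLE_injective hW)).comp_linearIsometry (ℝ ∙ x)ᗮ.subtypeₗᵢ
  · exact Submodule.inner_right_of_mem_orthogonal (Submodule.mem_span_singleton_self x)
      (SetLike.coe_mem _)

theorem dotProduct_mulVec_smul_vecMulVec_add_smul_one {N : ℕ} (a b : ℝ) (x w : Fin N → ℝ) :
    (b • vecMulVec x x + a • 1) *ᵥ w ⬝ᵥ w = b * (x ⬝ᵥ w) ^ 2 + a * (w ⬝ᵥ w) := by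
  simp [add_mulVec, smul_mulVec, vecMulVec_mulVec, add_dotProduct, sq]

theorem truncLap_smul_vecMulVec_add_smul_one {N k : ℕ} (hk : k < N) (a : ℝ) {b : ℝ} (hb : 0 ≤ b)
    (x : Fin N → ℝ) : truncLap k (b • vecMulVec x x + a • 1) = k * a := by
  refine IsLeast.csInf_eq ⟨?_, ?_⟩
  · obtain ⟨v, hv, hvx⟩ := exists_orthonormal_forall_inner_eq_zero
      (by simpa using hk : k < finrank ℝ (EuclideanSpace ℝ (Fin N))) (WithLp.toLp 2 x)
    have hv' : ∀ i j, v i ⬝ᵥ v j = if i = j then (1 : ℝ) else 0 := fun i j => by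
      simpa [EuclideanSpace.inner_eq_star_dotProduct, dotProduct_comm] using
        orthonormal_iff_ite.1 hv i j
    have hvx' : ∀ i, x ⬝ᵥ v i = 0 := fun i => by
      simpa [EuclideanSpace.inner_eq_star_dotProduct, dotProduct_comm] using hvx i
    refine ⟨fun i => v i, hv', ?_⟩
    simp [dotProduct_mulVec_smul_vecMulVec_add_smul_one, hvx', hv']
  · rintro s ⟨v, hv, rfl⟩
    calc (k : ℝ) * a = ∑ _i : Fin k, a := by simp
      _ ≤ _ := Finset.sum_le_sum fun i _ => by
        rw [dotProduct_mulVec_smul_vecMulVec_add_smul_one, hv, if_pos rfl]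
        nlinarith [sq_nonneg (x ⬝ᵥ v i)]

end TruncatedLaplacian

section Radial

variable {E : Type*} [NormedAddCommGroup E] [InnerProductSpace ℝ E]

theorem hasFDerivAt_comp_norm_sq {g : ℝ → ℝ} {d : ℝ} {x : E} (h : HasDerivAt g d (‖x‖ ^ 2)) :
    HasFDerivAt (fun y => g (‖y‖ ^ 2)) ((2 * d) • innerSL ℝ x) x := by
  have := h.comp_hasFDerivAt x (hasStrictFDerivAt_norm_sq x).hasFDerivAt
  rwa [← Nat.cast_smul_eq_nsmul ℝ, smul_smul, mul_comm d, Nat.cast_ofNat] at this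

variable {g : ℝ → ℝ} {U : Set ℝ}

theorem fderiv_fderiv_comp_norm_sq_apply (hU : IsOpen U) (hUnonneg : Ici 0 ⊆ U)
    (hg : ContDiffOn ℝ 2 g U) (x a b : E) :
    fderiv ℝ (fderiv ℝ fun y => g (‖y‖ ^ 2)) x a b =
      2 * deriv g (‖x‖ ^ 2) * inner ℝ a b +
        4 * deriv (deriv g) (‖x‖ ^ 2) * inner ℝ x a * inner ℝ x b := by
  have hU' : ∀ y : E, U ∈ 𝓝 (‖y‖ ^ 2) := fun y =>
    hU.mem_nhds (hUnonneg (mem_Ici.2 (sq_nonneg _)))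
  have hg' : ∀ y : E, HasDerivAt g (deriv g (‖y‖ ^ 2)) (‖y‖ ^ 2) := fun y =>
    ((hg.differentiableOn (by norm_num)).differentiableAt (hU' y)).hasDerivAt
  have hg'' : HasDerivAt (deriv g) (deriv (deriv g) (‖x‖ ^ 2)) (‖x‖ ^ 2) :=
    (((hg.deriv_of_isOpen hU (by norm_num : (1 : WithTop ℕ∞) + 1 ≤ 2)).differentiableOn
      one_ne_zero).differentiableAt (hU' x)).hasDerivAt
  have hfderiv : fderiv ℝ (fun y => g (‖y‖ ^ 2)) =
      fun y : E => (2 * deriv g (‖y‖ ^ 2)) • innerSL ℝ y :=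
    funext fun y => (hasFDerivAt_comp_norm_sq (hg' y)).fderiv
  rw [hfderiv, (((hasFDerivAt_comp_norm_sq hg'').const_mul 2).fun_smul
    (innerSL ℝ : E →L[ℝ] E →L[ℝ] ℝ).hasFDerivAt).fderiv]
  simp only [_root_.add_apply, _root_.smul_apply, ContinuousLinearMap.smulRight_apply,
    smul_eq_mul]
  rw [innerSL_apply_apply, innerSL_apply_apply, innerSL_apply_apply]
  ring

theorem hess_comp_norm_sq {N : ℕ} (hU : IsOpen U) (hUnonneg : Ici 0 ⊆ U)
    (hg : ContDiffOn ℝ 2 g U) (x : EuclideanSpace ℝ (Fin N)) :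
    hess (fun y => g (‖y‖ ^ 2)) x =
      (4 * deriv (deriv g) (‖x‖ ^ 2)) • Matrix.vecMulVec x x + (2 * deriv g (‖x‖ ^ 2)) • 1 := by
  ext i j
  simp only [hess, iteratedFDeriv_two_apply, Matrix.cons_val_zero, Matrix.cons_val_one,
    fderiv_fderiv_comp_norm_sq_apply hU hUnonneg hg, EuclideanSpace.inner_single_right,
    PiLp.single_apply, eq_comm (a := j), MonoidWithZeroHom.map_ite_one_zero, mul_ite, mul_one,
    mul_zero, Real.ringHom_apply, one_mul, Matrix.add_apply, Matrix.smul_apply,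
    Matrix.vecMulVec_apply, smul_eq_mul, Matrix.one_apply]
  ring

end Radial

section Profile

open MeasureTheory intervalIntegral

theorem tendsto_integral_inv_nhdsGT_zero {F : ℝ → ℝ} {a : ℝ} (ha : 0 < a) (hF0 : F 0 = 0)
    (hFd : DifferentiableAt ℝ F 0) (hFpos : ∀ t ∈ Ioc 0 a, 0 < F t)
    (hFc : ContinuousOn F (Ioc 0 a)) :
    Tendsto (fun y => ∫ t in y..a, (F t)⁻¹) (𝓝[>] 0) atTop := by
  have hint : ∀ y ∈ Ioc 0 a, ∀ z ∈ Ioc 0 a, IntervalIntegrable (fun t => (F t)⁻¹) volume y z :=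
    fun y hy z hz => ((hFc.inv₀ fun t ht => (hFpos t ht).ne').mono
      (ordConnected_Ioc.uIcc_subset hy hz)).intervalIntegrable
  obtain ⟨L, hL⟩ := hFd.isBigO_sub.bound
  obtain ⟨b, hb, hbF⟩ : ∃ b ∈ Ioc 0 a, ∀ t ∈ Ioc 0 b, F t ≤ L * t := by
    obtain ⟨b, hb0, hbsub⟩ := mem_nhdsGT_iff_exists_Ioc_subset.1
      (nhdsWithin_le_nhds (hL.and (Iio_mem_nhds ha)))
    refine ⟨min b (a / 2), ⟨lt_min hb0 (half_pos ha), by linarith [min_le_right b (a / 2)]⟩,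
      fun t ht => ?_⟩
    have := (hbsub ⟨ht.1, ht.2.trans (min_le_left _ _)⟩).1
    rw [hF0, sub_zero, sub_zero, Real.norm_of_nonneg ht.1.le] at this
    exact (le_abs_self _).trans this
  have hL0 : 0 < L :=
    pos_of_mul_pos_left ((hFpos b hb).trans_le (hbF b ⟨hb.1, le_rfl⟩)) hb.1.le
  have hlower : ∀ y ∈ Ioo 0 b, L⁻¹ * (Real.log b - Real.log y) + ∫ t in b..a, (F t)⁻¹ ≤
      ∫ t in y..a, (F t)⁻¹ := by
    intro y hy
    have hya : y ∈ Ioc 0 a := ⟨hy.1, hy.2.le.trans hb.2⟩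
    rw [← integral_add_adjacent_intervals (hint y hya b hb) (hint b hb a ⟨ha, le_rfl⟩),
      ← Real.log_div hb.1.ne' hy.1.ne', ← integral_inv_of_pos hy.1 hb.1,
      ← intervalIntegral.integral_const_mul]
    gcongr
    refine integral_mono_on hy.2.le ?_ (hint y hya b hb) fun t ht => ?_
    · exact (continuousOn_const.mul (continuousOn_inv₀.mono fun t ht =>
        (hy.1.trans_le (uIcc_of_le hy.2.le ▸ ht).1).ne')).intervalIntegrable
    · have ht0 : 0 < t := hy.1.trans_le ht.1
      rw [← mul_inv]
      exact inv_anti₀ (hFpos t ⟨ht0, ht.2.trans hb.2⟩) (hbF t ⟨ht0, ht.2⟩)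
  refine tendsto_atTop_mono' _ (mem_of_superset (Ioo_mem_nhdsGT hb.1) hlower)
    (tendsto_atTop_add_const_right _ _ ?_)
  exact (tendsto_atTop_add_const_left _ _ (tendsto_neg_atBot_atTop.comp
      Real.tendsto_log_nhdsGT_zero)).const_mul_atTop (inv_pos.2 hL0)

theorem exists_antitoneOn_rightInvOn_of_tendsto_atTop {Φ : ℝ → ℝ} {c : ℝ} (hc : 0 < c)
    (hΦc : ContinuousOn Φ (Ioc 0 c)) (hΦa : StrictAntiOn Φ (Ioc 0 c))
    (hΦ : Tendsto Φ (𝓝[>] 0) atTop) :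
    ∃ g : ℝ → ℝ, MapsTo g (Ioi (Φ c)) (Ioo 0 c) ∧ (∀ s ∈ Ioi (Φ c), Φ (g s) = s) ∧
      AntitoneOn g (Ioi (Φ c)) ∧ ContinuousOn g (Ioi (Φ c)) ∧ Tendsto g atTop (𝓝 0) := by
  have hsurj : ∀ s ∈ Ioi (Φ c), ∃ y ∈ Ioo 0 c, Φ y = s := by
    intro s hs
    obtain ⟨y₀, hsy₀, hy₀⟩ := ((hΦ.eventually_gt_atTop s).and (Ioo_mem_nhdsGT hc)).exists
    obtain ⟨y, hy, rfl⟩ := intermediate_value_Icc' hy₀.2.le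
      (hΦc.mono fun z hz => ⟨hy₀.1.trans_le hz.1, hz.2⟩) ⟨le_of_lt hs, hsy₀.le⟩
    exact ⟨y, ⟨hy₀.1.trans_le hy.1, hy.2.lt_of_ne (by rintro rfl; exact (mem_Ioi.1 hs).false)⟩,
      rfl⟩
  have hΦmaps : MapsTo Φ (Ioo 0 c) (Ioi (Φ c)) := fun y hy =>
    hΦa ⟨hy.1, hy.2.le⟩ ⟨hc, le_rfl⟩ hy.2
  set g := Function.invFunOn Φ (Ioo 0 c)
  have hmaps : MapsTo g (Ioi (Φ c)) (Ioo 0 c) := fun s hs => Function.invFunOn_mem (hsurj s hs)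
  have hright : ∀ s ∈ Ioi (Φ c), Φ (g s) = s := fun s hs => Function.invFunOn_eq (hsurj s hs)
  have hleft : ∀ y ∈ Ioo 0 c, g (Φ y) = y := fun y hy =>
    hΦa.injOn (Ioo_subset_Ioc_self (hmaps (hΦmaps hy))) (Ioo_subset_Ioc_self hy)
      (hright _ (hΦmaps hy))
  have hanti : AntitoneOn g (Ioi (Φ c)) := fun s hs t ht hst => by
    by_contra! hlt
    have := hΦa (Ioo_subset_Ioc_self (hmaps hs)) (Ioo_subset_Ioc_self (hmaps ht)) hlt
    rw [hright s hs, hright t ht] at this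
    exact this.not_ge hst
  have himage : g '' Ioi (Φ c) = Ioo 0 c :=
    hmaps.image_subset.antisymm fun y hy => ⟨Φ y, hΦmaps hy, hleft y hy⟩
  refine ⟨g, hmaps, hright, hanti, fun s hs => ?_, ?_⟩
  · -- a monotone map (here `toDual ∘ g`) whose image is a neighbourhood is continuous
    have : ContinuousAt (fun t => OrderDual.toDual (g t)) s :=
      continuousAt_of_monotoneOn_of_image_mem_nhds hanti.dual_right (Ioi_mem_nhds hs)
        (show g '' Ioi (Φ c) ∈ 𝓝 (g s) from himage ▸ isOpen_Ioo.mem_nhds (hmaps hs))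
    exact this.continuousWithinAt
  · refine tendsto_order.2 ⟨fun a ha => ?_, fun b hb => ?_⟩
    · filter_upwards [eventually_gt_atTop (Φ c)] with s hs using ha.trans (hmaps hs).1
    · obtain ⟨y, hy, hyb⟩ : ∃ y ∈ Ioo 0 c, y < b :=
        ⟨min (b / 2) (c / 2), ⟨by positivity, by simp [hc]⟩, by simp [hb]⟩
      filter_upwards [eventually_ge_atTop (Φ y)] with s hs
      exact ((hanti (hΦmaps hy) ((hΦmaps hy).trans_le hs) hs).trans_eq (hleft y hy)).trans_lt hyb

theorem exists_antitoneOn_hasDerivAt_neg_comp {F : ℝ → ℝ} {δ α : ℝ} (hα : α ∈ Ioo 0 δ)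
    (hF0 : F 0 = 0) (hFd : DifferentiableAt ℝ F 0) (hFpos : ∀ t ∈ Ioo 0 δ, 0 < F t)
    (hFc : ContinuousOn F (Ioo 0 δ)) :
    ∃ g : ℝ → ℝ, ∃ m < 0, g 0 = α ∧ MapsTo g (Ioi m) (Ioo 0 δ) ∧ AntitoneOn g (Ioi m) ∧
      (∀ s ∈ Ioi m, HasDerivAt g (-F (g s)) s) ∧ Tendsto g atTop (𝓝 0) := by
  obtain ⟨hα0, hαδ⟩ := hα
  obtain ⟨c, hαc, hcδ⟩ := exists_between hαδ
  have hc0 : 0 < c := hα0.trans hαc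
  have hsub : Ioc 0 c ⊆ Ioo 0 δ := fun y hy => ⟨hy.1, hy.2.trans_lt hcδ⟩
  have hFinv : ContinuousOn (fun t => (F t)⁻¹) (Ioo 0 δ) :=
    hFc.inv₀ fun t ht => (hFpos t ht).ne'
  set Φ := fun y => ∫ t in y..α, (F t)⁻¹
  have hΦd : ∀ y ∈ Ioo 0 δ, HasDerivAt Φ (-(F y)⁻¹) y := fun y hy =>
    integral_hasDerivAt_left
      ((hFinv.mono (ordConnected_Ioo.uIcc_subset hy ⟨hα0, hαδ⟩)).intervalIntegrable)
      (hFinv.stronglyMeasurableAtFilter isOpen_Ioo y hy)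
      (hFinv.continuousAt (isOpen_Ioo.mem_nhds hy))
  have hΦc : ContinuousOn Φ (Ioc 0 c) := fun y hy =>
    (hΦd y (hsub hy)).continuousAt.continuousWithinAt
  have hΦa : StrictAntiOn Φ (Ioc 0 c) := by
    refine strictAntiOn_of_deriv_neg (convex_Ioc 0 c) hΦc fun y hy => ?_
    rw [interior_Ioc] at hy
    rw [(hΦd y (hsub (Ioo_subset_Ioc_self hy))).deriv, neg_lt_zero, inv_pos]
    exact hFpos y (hsub (Ioo_subset_Ioc_self hy))
  have hΦlim : Tendsto Φ (𝓝[>] 0) atTop :=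
    tendsto_integral_inv_nhdsGT_zero hα0 hF0 hFd (fun t ht => hFpos t ⟨ht.1, ht.2.trans_lt hαδ⟩)
      (hFc.mono fun t ht => ⟨ht.1, ht.2.trans_lt hαδ⟩)
  obtain ⟨g, hmaps, hright, hanti, hcont, hlim⟩ :=
    exists_antitoneOn_rightInvOn_of_tendsto_atTop hc0 hΦc hΦa hΦlim
  have hΦα : Φ α = 0 := integral_same
  have hm : Φ c < 0 := hΦα ▸ hΦa ⟨hα0, hαc.le⟩ ⟨hc0, le_rfl⟩ hαc
  refine ⟨g, Φ c, hm, ?_, fun s hs => hsub (Ioo_subset_Ioc_self (hmaps hs)), hanti,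
    fun s hs => ?_, hlim⟩
  · exact hΦa.injOn (Ioo_subset_Ioc_self (hmaps hm)) ⟨hα0, hαc.le⟩ (by rw [hright 0 hm, hΦα])
  · have hgs := hsub (Ioo_subset_Ioc_self (hmaps hs))
    have := HasDerivAt.of_local_left_inverse (hcont.continuousAt (Ioi_mem_nhds hs)) (hΦd _ hgs)
      (neg_ne_zero.2 (inv_ne_zero (hFpos _ hgs).ne'))
      (mem_of_superset (Ioi_mem_nhds hs) hright)
    rwa [inv_neg, inv_inv] at this

variable {F g : ℝ → ℝ} {U V : Set ℝ}

theorem contDiffOn_succ_of_hasDerivAt_comp {n : ℕ} (hU : IsOpen U) (hF : ContDiffOn ℝ n F V)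
    (hgV : MapsTo g U V) (hg : ∀ s ∈ U, HasDerivAt g (F (g s)) s) :
    ContDiffOn ℝ (n + 1) g U := by
  have hdiff : DifferentiableOn ℝ g U := fun s hs =>
    (hg s hs).differentiableAt.differentiableWithinAt
  have hderiv : EqOn (F ∘ g) (deriv g) U := fun s hs => (hg s hs).deriv.symm
  induction n with
  | zero =>
    refine (contDiffOn_succ_iff_deriv_of_isOpen hU).2 ⟨hdiff, by simp, ?_⟩
    exact (contDiffOn_zero.2 (hF.continuousOn.comp hdiff.continuousOn hgV)).congr hderiv.symm
  | succ n ih =>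
    refine (contDiffOn_succ_iff_deriv_of_isOpen hU).2 ⟨hdiff, by simp, ?_⟩
    exact (hF.comp (ih (hF.of_le (by simp))) hgV).congr hderiv.symm

theorem monotoneOn_deriv_of_hasDerivAt_neg_comp (hF : MonotoneOn F V) (hgV : MapsTo g U V)
    (hganti : AntitoneOn g U) (hg : ∀ s ∈ U, HasDerivAt g (-F (g s)) s) :
    MonotoneOn (deriv g) U := fun s hs t ht hst => by
  rw [(hg s hs).deriv, (hg t ht).deriv, neg_le_neg_iff]
  exact hF (hgV ht) (hgV hs) (hganti hs ht hst)

end Profile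

theorem exists_radial_solution {N k : ℕ} (hk1 : 1 ≤ k) (hkN : k < N) {f : ℝ → ℝ} {δ : ℝ}
    (hf1 : ContDiffOn ℝ 1 f (Ioo (-δ) δ)) (hf2 : MonotoneOn f (Ioo (-δ) δ))
    (hf3 : ∀ s ∈ Ioo (0 : ℝ) δ, 0 < f s) (hf0 : f 0 = 0) {α : ℝ} (hα : α ∈ Ioo 0 δ) :
    ∃ u : EuclideanSpace ℝ (Fin N) → ℝ,
      ContDiff ℝ 2 u ∧ (∃ v : ℝ → ℝ, ∀ x, u x = v ‖x‖) ∧ u 0 = α ∧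
      (∀ x, 0 < u x ∧ u x ≤ α) ∧ Tendsto u (comap norm atTop) (𝓝 0) ∧
      ∀ x, truncLap k (hess u x) + f (u x) = 0 := by
  have hk : (0 : ℝ) < 2 * k := by
    have : (1 : ℝ) ≤ k := by exact_mod_cast hk1
    linarith
  have hsub : Ioo 0 δ ⊆ Ioo (-δ) δ := fun t ht => ⟨by linarith [ht.1, ht.2], ht.2⟩
  have h0 : (0 : ℝ) ∈ Ioo (-δ) δ := ⟨by linarith [hα.1, hα.2], hα.1.trans hα.2⟩
  set F := fun t => f t / (2 * k)
  obtain ⟨g, m, hm, hg0, hgmaps, hganti, hgderiv, hglim⟩ :=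
    exists_antitoneOn_hasDerivAt_neg_comp (F := F) hα (by simp [F, hf0])
      (((hf1.differentiableOn one_ne_zero 0 h0).differentiableAt
        (isOpen_Ioo.mem_nhds h0)).div_const _)
      (fun t ht => div_pos (hf3 t ht) hk) ((hf1.continuousOn.mono hsub).div_const _)
  have hgC2 : ContDiffOn ℝ 2 g (Ioi m) :=
    contDiffOn_succ_of_hasDerivAt_comp (n := 1) (F := fun t => -F t) isOpen_Ioi
      ((hf1.div_const _).neg.mono hsub) hgmaps hgderiv
  have hU : Ici 0 ⊆ Ioi m := fun s hs => hm.trans_le hs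
  have hQ : ∀ x : EuclideanSpace ℝ (Fin N), ‖x‖ ^ 2 ∈ Ioi m := fun x =>
    hU (mem_Ici.2 (sq_nonneg _))
  have hconvex : ∀ s ∈ Ioi m, 0 ≤ deriv (deriv g) s := fun s hs =>
    (monotoneOn_deriv_of_hasDerivAt_neg_comp
      (fun a ha b hb hab => div_le_div_of_nonneg_right (hf2 (hsub ha) (hsub hb) hab) hk.le)
      hgmaps hganti hgderiv).derivWithin_nonneg.trans_eq (derivWithin_of_isOpen isOpen_Ioi hs)
  refine ⟨fun x => g (‖x‖ ^ 2), hgC2.comp_contDiff (contDiff_norm_sq ℝ) hQ,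
    ⟨fun r => g (r ^ 2), fun x => rfl⟩, by simpa using hg0,
    fun x => ⟨(hgmaps (hQ x)).1, hg0 ▸ hganti hm (hQ x) (sq_nonneg _)⟩,
    hglim.comp ((tendsto_pow_atTop two_ne_zero).comp tendsto_comap), fun x => ?_⟩
  rw [hess_comp_norm_sq isOpen_Ioi hU hgC2, truncLap_smul_vecMulVec_add_smul_one hkN _
    (mul_nonneg zero_le_four (hconvex _ (hQ x))), (hgderiv _ (hQ x)).deriv]
  simp only [F]
  field_simp
  ring

/-- under the assumptions (3.2) on `f` (C¹ and nondecreasing on `(-δ,δ)`,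
positive on `(0,δ)`, `f(0) = 0`), for every `α ∈ (0,δ)` there is a positive bounded
radial C² solution `u_α` of `P⁻ₖ(D²u) + f(u) = 0` in `ℝ^N` with `u_α(0) = α`,
`0 < u_α ≤ α`, and `u_α(x) → 0` as `|x| → ∞`; in particular the equation admits
infinitely many positive bounded radial classical solutions. -/
theorem stmt9 {n : ℕ} (k : ℕ) (hk1 : 1 ≤ k) (hk2 : k ≤ n + 1)
    (f : ℝ → ℝ) (δ : ℝ) (hδ : 0 < δ)
    (hf1 : ContDiffOn ℝ 1 f (Set.Ioo (-δ) δ))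
    (hf2 : MonotoneOn f (Set.Ioo (-δ) δ))
    (hf3 : ∀ s ∈ Set.Ioo (0 : ℝ) δ, 0 < f s)
    (hf0 : f 0 = 0) :
    (∀ α ∈ Set.Ioo (0 : ℝ) δ, ∃ u : EuclideanSpace ℝ (Fin (n + 2)) → ℝ,
      ContDiff ℝ 2 u ∧ (∃ v : ℝ → ℝ, ∀ x, u x = v ‖x‖) ∧ u 0 = α ∧
      (∀ x, 0 < u x ∧ u x ≤ α) ∧
      Filter.Tendsto u (Filter.comap norm Filter.atTop) (nhds 0) ∧
      ∀ x, truncLap k (hess u x) + f (u x) = 0) ∧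
    Set.Infinite {u : EuclideanSpace ℝ (Fin (n + 2)) → ℝ |
      ContDiff ℝ 2 u ∧ (∃ v : ℝ → ℝ, ∀ x, u x = v ‖x‖) ∧ (∀ x, 0 < u x) ∧
      (∃ C : ℝ, ∀ x, u x ≤ C) ∧ ∀ x, truncLap k (hess u x) + f (u x) = 0} := by
  have hsol := fun α (hα : α ∈ Ioo 0 δ) =>
    exists_radial_solution hk1 (by omega : k < n + 2) hf1 hf2 hf3 hf0 hα
  refine ⟨hsol, ((Ioo_infinite hδ).mono fun α hα => ?_).of_image fun u => u 0⟩
  obtain ⟨u, hC2, hrad, hu0, hbound, -, hpde⟩ := hsol α hα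
  exact ⟨u, ⟨hC2, hrad, fun x => (hbound x).1, ⟨α, fun x => (hbound x).2⟩, hpde⟩, hu0⟩
end

section
/- Let k ≥ 1 and let f : ℝ → ℝ satisfy: there exists δ > 0 such that f is C¹ and nondecreasing on (−δ, δ), f(u) > 0 for all u ∈ (0, δ), and f(0) = 0. Then for every α ∈ (0, δ), the initial value problem v'(r) + (r/k) f(v(r)) = 0, v(0) = α, has a (unique) solution v_α defined on all of [0, ∞), and v_α satisfies: v_α is strictly decreasing on [0, ∞), 0 < v_α(r) ≤ α for all r ≥ 0, v_α(r) → 0 as r → ∞, and v_α''(r) ≥ v_α'(r)/r for every r > 0. -/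
/-!
Separation of variables. Put `Ψ(u) = ∫_α^u ds / f(s)`; a positive solution satisfies
`Ψ(v(r)) = -r² / (2k)`. Because `f(s) = O(s)` as `s → 0⁺`, `1 / f` is not integrable at `0`, so
`Ψ` increases from `-∞` to `0` on `(0, α]` and `v(r) = Ψ⁻¹(-r² / (2k))` is a global solution with
values in `(0, α]`, decreasing to `0`. Along it, `v'' - v'/r = (r/k)² f'(v) f(v) ≥ 0`. Uniqueness
holds because `f` is locally Lipschitz near the values of `v`, which stay in `(0, α]`.
-/

open Set Filter Topology Real intervalIntegral Asymptotics Function MeasureTheory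

section Uniqueness

variable {E : Type*} [NormedAddCommGroup E] [NormedSpace ℝ E]

theorem eventually_lipschitzOnWith_smul {c : ℝ → ℝ} {g : E → E} {K : NNReal} {U : Set E} {t : ℝ}
    (hc : ContinuousAt c t) (hg : LipschitzOnWith K g U) :
    ∃ K', ∀ᶠ s in 𝓝 t, LipschitzOnWith K' (fun y => c s • g y) U := by
  refine ⟨(‖c t‖₊ + 1) * K, ?_⟩
  filter_upwards [(continuous_nnnorm.continuousAt.comp hc).eventually
    (eventually_lt_nhds (lt_add_one ‖c t‖₊))] with s hs
  exact ((lipschitzWith_smul (c s)).comp_lipschitzOnWith hg).weaken (mul_le_mul_left hs.le K)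

theorem eqOn_Ici_of_hasDerivAt_of_lipschitzOnWith {F : ℝ → E → E} {v w : ℝ → E} {t₀ : ℝ}
    (hF : ∀ t ≥ t₀, ∃ K, ∃ U ∈ 𝓝 (v t), ∀ᶠ s in 𝓝 t, LipschitzOnWith K (F s) U)
    (hv : ∀ t ≥ t₀, HasDerivAt v (F t (v t)) t) (hw : ∀ t ≥ t₀, HasDerivAt w (F t (w t)) t)
    (h₀ : w t₀ = v t₀) : EqOn w v (Ici t₀) := by
  have hcont : ∀ u : ℝ → E, (∀ t ≥ t₀, HasDerivAt u (F t (u t)) t) →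
      ∀ a ≥ t₀, ∀ b, ContinuousOn u (Icc a b) :=
    fun u hu a ha b t ht => (hu t (ha.trans ht.1)).continuousAt.continuousWithinAt
  intro b hb
  have hclosed : IsClosed ({t | w t = v t} ∩ Icc t₀ b) := by
    have := ((hcont w hw t₀ le_rfl b).sub (hcont v hv t₀ le_rfl b)).preimage_isClosed_of_isClosed
      isClosed_Icc (isClosed_singleton (x := 0))
    convert this using 1
    ext t
    simp [sub_eq_zero, and_comm]
  refine IsClosed.Icc_subset_of_forall_mem_nhdsWithin hclosed h₀ ?_ ⟨hb, le_rfl⟩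
  rintro t ⟨hwv, ht₀, -⟩
  obtain ⟨K, U, hU, hK⟩ := hF t ht₀
  have hwU := (hw t ht₀).continuousAt.eventually_mem (show U ∈ 𝓝 (w t) from hwv ▸ hU)
  have hvU := (hv t ht₀).continuousAt.eventually_mem hU
  obtain ⟨c, hc, hsub⟩ := mem_nhdsGE_iff_exists_Ico_subset.1
    (nhdsWithin_le_nhds (hK.and (hwU.and hvU)))
  have heq : EqOn w v (Icc t c) := ODE_solution_unique_of_mem_Icc_right (s := fun _ => U)
    (fun s hs => (hsub hs).1) (hcont w hw t ht₀ c)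
    (fun s hs => (hw s (ht₀.trans hs.1)).hasDerivWithinAt) (fun s hs => (hsub hs).2.1)
    (hcont v hv t ht₀ c) (fun s hs => (hv s (ht₀.trans hs.1)).hasDerivWithinAt)
    (fun s hs => (hsub hs).2.2) hwv
  filter_upwards [Ioo_mem_nhdsGT hc] with s hs using heq (Ioo_subset_Icc_self hs)

end Uniqueness

theorem Set.BijOn.strictMonoOn_invFunOn {α β : Type*} [LinearOrder α] [Preorder β] [Nonempty α]
    {g : α → β} {s : Set α} {t : Set β} (h : BijOn g s t) (hg : StrictMonoOn g s) :
    StrictMonoOn (invFunOn g s) t := by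
  intro y₁ h₁ y₂ h₂ hlt
  have hmaps := h.surjOn.mapsTo_invFunOn
  rwa [← hg.lt_iff_lt (hmaps h₁) (hmaps h₂), h.invOn_invFunOn.2 h₁, h.invOn_invFunOn.2 h₂]

theorem StrictMonoOn.continuousOn_Iic {g : ℝ → ℝ} {b : ℝ} (hg : StrictMonoOn g (Iic b))
    (himg : (g '' Iic b).OrdConnected) : ContinuousOn g (Iic b) := by
  intro y hy
  have hy₁ : y - 1 ∈ Iic b := by simp only [mem_Iic] at hy ⊢; linarith
  have hlt : g (y - 1) < g y := hg hy₁ hy (by linarith)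
  have hIcc : Icc (g (y - 1)) (g b) ⊆ g '' Iic b :=
    himg.out (mem_image_of_mem g hy₁) (mem_image_of_mem g self_mem_Iic)
  rcases (mem_Iic.1 hy).lt_or_eq with hyb | rfl
  · exact (hg.continuousAt_of_image_mem_nhds (Iic_mem_nhds hyb)
      (mem_of_superset (Icc_mem_nhds hlt (hg hy self_mem_Iic hyb)) hIcc)).continuousWithinAt
  · exact hg.continuousWithinAt_left_of_image_mem_nhdsWithin self_mem_nhdsWithin
      (mem_of_superset (Icc_mem_nhdsLE hlt) hIcc)

theorem div_le_deriv_deriv_of_hasDerivAt {f v : ℝ → ℝ} {k r f' : ℝ} (hr : 0 < r)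
    (hv : ∀ t, HasDerivAt v (-(t / k) * f (v t)) t) (hf : HasDerivAt f f' (v r))
    (hf' : 0 ≤ f') (hfv : 0 ≤ f (v r)) : deriv v r / r ≤ deriv (deriv v) r := by
  have hderiv : deriv v = fun t => -(t / k) * f (v t) := funext fun t => (hv t).deriv
  have h2 : HasDerivAt (deriv v)
      (-(1 / k) * f (v r) + -(r / k) * (f' * (-(r / k) * f (v r)))) r := by
    rw [hderiv]
    exact ((hasDerivAt_id r).div_const k).neg.mul (hf.comp r (hv r))
  have hdiv : -(r / k) * f (v r) / r = -(1 / k) * f (v r) := by field_simp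
  rw [h2.deriv, hderiv, hdiv]
  nlinarith [mul_nonneg (mul_nonneg hf' hfv) (sq_nonneg (r / k))]

/-- The time the flow of `u' = f u` takes to go from `α` to `u`. -/
noncomputable def travelTime (f : ℝ → ℝ) (α u : ℝ) : ℝ := ∫ s in α..u, (f s)⁻¹

section TravelTime

variable {f : ℝ → ℝ} {α : ℝ}

theorem intervalIntegrable_inv_of_mem_Ioc (hfc : ContinuousOn f (Ioc 0 α))
    (hpos : ∀ s ∈ Ioc 0 α, 0 < f s) {a b : ℝ} (ha : a ∈ Ioc 0 α) (hb : b ∈ Ioc 0 α) :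
    IntervalIntegrable (fun s => (f s)⁻¹) volume a b :=
  ((hfc.inv₀ fun s hs => (hpos s hs).ne').mono
    (ordConnected_Ioc.uIcc_subset ha hb)).intervalIntegrable

theorem hasDerivAt_travelTime (hfc : ContinuousOn f (Ioc 0 α)) (hpos : ∀ s ∈ Ioc 0 α, 0 < f s)
    {u : ℝ} (hu : u ∈ Ioo 0 α) : HasDerivAt (travelTime f α) (f u)⁻¹ u := by
  have hinv : ContinuousOn (fun s => (f s)⁻¹) (Ioc 0 α) := hfc.inv₀ fun s hs => (hpos s hs).ne'
  exact integral_hasDerivAt_right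
    (intervalIntegrable_inv_of_mem_Ioc hfc hpos ⟨hu.1.trans hu.2, le_rfl⟩ (Ioo_subset_Ioc_self hu))
    ((hinv.mono Ioo_subset_Ioc_self).stronglyMeasurableAtFilter isOpen_Ioo u hu)
    (hinv.continuousAt (Ioc_mem_nhds hu.1 hu.2))

theorem continuousOn_travelTime (hfc : ContinuousOn f (Ioc 0 α))
    (hpos : ∀ s ∈ Ioc 0 α, 0 < f s) : ContinuousOn (travelTime f α) (Ioc 0 α) := by
  intro u hu
  have hle : u / 2 ≤ α := by linarith [hu.1, hu.2]
  have hint := intervalIntegrable_inv_of_mem_Ioc hfc hpos ⟨half_pos hu.1, hle⟩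
    ⟨hu.1.trans_le hu.2, le_rfl⟩
  have hnhds : uIcc (u / 2) α ∈ 𝓝[Ioc 0 α] u := by
    rw [uIcc_of_le hle]
    exact mem_nhdsWithin.2 ⟨Ioi (u / 2), isOpen_Ioi, half_lt_self hu.1,
      fun x hx => ⟨le_of_lt hx.1, hx.2.2⟩⟩
  exact (continuousOn_primitive_interval' hint right_mem_uIcc u
    (mem_of_mem_nhdsWithin hu hnhds)).mono_of_mem_nhdsWithin hnhds

theorem strictMonoOn_travelTime (hfc : ContinuousOn f (Ioc 0 α))
    (hpos : ∀ s ∈ Ioc 0 α, 0 < f s) : StrictMonoOn (travelTime f α) (Ioc 0 α) := by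
  refine strictMonoOn_of_deriv_pos (convex_Ioc 0 α) (continuousOn_travelTime hfc hpos) ?_
  intro u hu
  rw [interior_Ioc] at hu
  rw [(hasDerivAt_travelTime hfc hpos hu).deriv]
  exact inv_pos.2 (hpos u (Ioo_subset_Ioc_self hu))

theorem tendsto_travelTime_atBot (hα : 0 < α) (hfc : ContinuousOn f (Ioc 0 α))
    (hpos : ∀ s ∈ Ioc 0 α, 0 < f s) (hO : f =O[𝓝[>] 0] id) :
    Tendsto (travelTime f α) (𝓝[>] 0) atBot := by
  obtain ⟨c, hc⟩ := hO.bound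
  obtain ⟨b, hb, hsub⟩ := mem_nhdsGT_iff_exists_Ioc_subset.1 (hc.and (Ioc_mem_nhdsGT hα))
  have hbound : ∀ s ∈ Ioc 0 b, 0 < f s ∧ f s ≤ c * s := fun s hs => by
    obtain ⟨hcs, hsα⟩ := hsub hs
    have := hpos s hsα
    rw [Real.norm_eq_abs, Real.norm_eq_abs, abs_of_pos this, id, abs_of_pos hs.1] at hcs
    exact ⟨this, hcs⟩
  have hfb := hbound b ⟨hb, le_rfl⟩
  have hc₀ : 0 < c := pos_of_mul_pos_left (hfb.1.trans_le hfb.2) hb.le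
  have hbα : b ∈ Ioc 0 α := ⟨hb, (hsub ⟨hb, le_rfl⟩).2.2⟩
  have hint := @intervalIntegrable_inv_of_mem_Ioc f α hfc hpos
  have key : ∀ u ∈ Ioo 0 b,
      travelTime f α u ≤ travelTime f α b - c⁻¹ * log b + c⁻¹ * log u := by
    intro u hu
    have huα : u ∈ Ioc 0 α := ⟨hu.1, hu.2.le.trans hbα.2⟩
    have hsplit : travelTime f α b - travelTime f α u = ∫ s in u..b, (f s)⁻¹ :=
      integral_interval_sub_left (hint ⟨hα, le_rfl⟩ hbα) (hint ⟨hα, le_rfl⟩ huα)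
    have hlin : ∫ s in u..b, (c * s)⁻¹ = c⁻¹ * (log b - log u) := by
      simp_rw [mul_inv]
      rw [intervalIntegral.integral_const_mul, integral_inv_of_pos hu.1 hb,
        log_div hb.ne' hu.1.ne']
    have hcmp : ∫ s in u..b, (c * s)⁻¹ ≤ ∫ s in u..b, (f s)⁻¹ := by
      refine integral_mono_on hu.2.le ?_ (hint huα hbα) fun s hs => ?_
      · exact (continuousOn_const.mul continuousOn_id).inv₀ (fun s hs => by
          rw [uIcc_of_le hu.2.le] at hs; exact mul_ne_zero hc₀.ne' (hu.1.trans_le hs.1).ne')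
          |>.intervalIntegrable
      · obtain ⟨hfs, hfle⟩ := hbound s ⟨hu.1.trans_le hs.1, hs.2⟩
        exact inv_anti₀ hfs hfle
    linarith
  refine tendsto_atBot_mono' _ ?_ (tendsto_atBot_add_const_left _
    (travelTime f α b - c⁻¹ * log b) (tendsto_log_nhdsGT_zero.const_mul_atBot (inv_pos.2 hc₀)))
  filter_upwards [Ioo_mem_nhdsGT hb] with u hu using key u hu

theorem bijOn_travelTime (hα : 0 < α) (hfc : ContinuousOn f (Ioc 0 α))
    (hpos : ∀ s ∈ Ioc 0 α, 0 < f s) (hO : f =O[𝓝[>] 0] id) :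
    BijOn (travelTime f α) (Ioc 0 α) (Iic 0) := by
  have hmono := strictMonoOn_travelTime hfc hpos
  have hzero : travelTime f α α = 0 := integral_same
  refine ⟨fun u hu => hzero ▸ hmono.monotoneOn hu ⟨hα, le_rfl⟩ hu.2, hmono.injOn, fun y hy => ?_⟩
  obtain ⟨u, hΨu, hu⟩ := ((tendsto_travelTime_atBot hα hfc hpos hO).eventually
    (eventually_le_atBot y)).and (Ioo_mem_nhdsGT hα) |>.exists
  obtain ⟨x, hx, hΨx⟩ := intermediate_value_Icc hu.2.le
    ((continuousOn_travelTime hfc hpos).mono fun s hs => ⟨hu.1.trans_le hs.1, hs.2⟩)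
    ⟨hΨu, hzero ▸ hy⟩
  exact ⟨x, ⟨hu.1.trans_le hx.1, hx.2⟩, hΨx⟩

end TravelTime

theorem exists_backward_solution {f : ℝ → ℝ} {α : ℝ} (hα : 0 < α)
    (hfc : ContinuousOn f (Ioc 0 α)) (hpos : ∀ s ∈ Ioc 0 α, 0 < f s) (hO : f =O[𝓝[>] 0] id) :
    ∃ I : ℝ → ℝ, I 0 = α ∧ StrictMonoOn I (Iic 0) ∧ MapsTo I (Iic 0) (Ioc 0 α) ∧
      ContinuousOn I (Iic 0) ∧ (∀ y < 0, HasDerivAt I (f (I y)) y) ∧ Tendsto I atBot (𝓝 0) := by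
  have hbij := bijOn_travelTime hα hfc hpos hO
  have hmono := strictMonoOn_travelTime hfc hpos
  set I := invFunOn (travelTime f α) (Ioc 0 α)
  have hinv : InvOn I (travelTime f α) (Ioc 0 α) (Iic 0) := hbij.invOn_invFunOn
  have hmaps : MapsTo I (Iic 0) (Ioc 0 α) := hbij.surjOn.mapsTo_invFunOn
  have hImono : StrictMonoOn I (Iic 0) := hbij.strictMonoOn_invFunOn hmono
  have hαmem : α ∈ Ioc 0 α := ⟨hα, le_rfl⟩
  have hI0 : I 0 = α := by
    simpa [travelTime] using hinv.1 hαmem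
  have hIcont : ContinuousOn I (Iic 0) := hImono.continuousOn_Iic <| by
    rw [(hbij.symm hinv.symm).image_eq]; infer_instance
  refine ⟨I, hI0, hImono, hmaps, hIcont, fun y hy => ?_, ?_⟩
  · have hIy : I y ∈ Ioo 0 α := ⟨(hmaps hy.le).1, hI0 ▸ hImono hy.le self_mem_Iic hy⟩
    have := (hasDerivAt_travelTime hfc hpos hIy).of_local_left_inverse
      ((hIcont y hy.le).continuousAt (Iic_mem_nhds hy)) (inv_pos.2 (hpos _ (hmaps hy.le))).ne'
      (by filter_upwards [Iic_mem_nhds hy] with z hz using hinv.2 hz)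
    rwa [inv_inv] at this
  · refine tendsto_order.2 ⟨fun a ha => ?_, fun ε hε => ?_⟩
    · filter_upwards [eventually_le_atBot 0] with y hy using ha.trans (hmaps hy).1
    · have hu : min ε α ∈ Ioc 0 α := ⟨lt_min hε hα, min_le_right _ _⟩
      have hΨu := hbij.mapsTo hu
      filter_upwards [eventually_lt_atBot (travelTime f α (min ε α))] with y hy
      calc I y < I (travelTime f α (min ε α)) := hImono (hy.le.trans hΨu) hΨu hy
        _ = min ε α := hinv.1 hu
        _ ≤ ε := min_le_left _ _

theorem exists_radial_solution_s10 {f : ℝ → ℝ} {α k : ℝ} (hα : 0 < α) (hk : 0 < k)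
    (hfc : ContinuousOn f (Ioc 0 α)) (hpos : ∀ s ∈ Ioc 0 α, 0 < f s) (hO : f =O[𝓝[>] 0] id) :
    ∃ v : ℝ → ℝ, (∀ r, HasDerivAt v (-(r / k) * f (v r)) r) ∧ v 0 = α ∧
      StrictAntiOn v (Ici 0) ∧ (∀ r, v r ∈ Ioc 0 α) ∧ Tendsto v atTop (𝓝 0) := by
  obtain ⟨I, hI0, hImono, hmaps, hIcont, hIderiv, hIlim⟩ :=
    exists_backward_solution hα hfc hpos hO
  set τ : ℝ → ℝ := fun r => -(r ^ 2 / (2 * k))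
  have hτ : ∀ r, τ r ≤ 0 := fun r => neg_nonpos.2 (by positivity)
  have hτd : ∀ r, HasDerivAt τ (-(r / k)) r := fun r => by
    refine ((hasDerivAt_pow 2 r).div_const (2 * k)).fun_neg.congr_deriv ?_
    field_simp
    norm_num
  have hcont : Continuous (I ∘ τ) := hIcont.comp_continuous (by fun_prop) hτ
  have hne : ∀ r ≠ 0, HasDerivAt (I ∘ τ) (-(r / k) * f (I (τ r))) r := fun r hr =>
    have hτr : τ r < 0 := neg_neg_of_pos (by positivity)
    ((hIderiv _ hτr).comp r (hτd r)).congr_deriv (mul_comm _ _)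
  refine ⟨I ∘ τ, fun r => ?_, by simp [τ, hI0], fun r₁ hr₁ r₂ _ hlt => ?_,
    fun r => hmaps (hτ r), hIlim.comp ?_⟩
  · rcases eq_or_ne r 0 with rfl | hr
    · exact hasDerivAt_of_hasDerivAt_of_ne hne hcont.continuousAt
        ((continuous_id.div_const k).neg.mul
          (hfc.comp_continuous hcont fun r => hmaps (hτ r))).continuousAt
    · exact hne r hr
  · have : τ r₂ < τ r₁ := by
      simp only [τ, mem_Ici] at hr₁ ⊢
      gcongr
    exact hImono (hτ r₂) (hτ r₁) this
  · exact tendsto_neg_atTop_atBot.comp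
      ((tendsto_pow_atTop two_ne_zero).atTop_div_const (by positivity))

theorem stmt10_general (k : ℕ) (hk : 1 ≤ k)
    (f : ℝ → ℝ) (δ : ℝ)
    (hf1 : ContDiffOn ℝ 1 f (Set.Ioo (-δ) δ))
    (hf2 : MonotoneOn f (Set.Ioo (-δ) δ))
    (hf3 : ∀ s ∈ Set.Ioo (0 : ℝ) δ, 0 < f s)
    (hf0 : f 0 = 0) :
    ∀ α ∈ Set.Ioo (0 : ℝ) δ, ∃ v : ℝ → ℝ,
      (∀ r ∈ Set.Ici (0 : ℝ), HasDerivAt v (-(r / k) * f (v r)) r) ∧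
      v 0 = α ∧
      StrictAntiOn v (Set.Ici 0) ∧
      (∀ r ∈ Set.Ici (0 : ℝ), 0 < v r ∧ v r ≤ α) ∧
      Filter.Tendsto v Filter.atTop (nhds 0) ∧
      (∀ r : ℝ, 0 < r → deriv v r / r ≤ deriv (deriv v) r) ∧
      (∀ w : ℝ → ℝ, (∀ r ∈ Set.Ici (0 : ℝ), HasDerivAt w (-(r / k) * f (w r)) r) →
        w 0 = α → ∀ r ∈ Set.Ici (0 : ℝ), w r = v r) := by
  rintro α ⟨hα, hαδ⟩
  have hk₀ : (0 : ℝ) < k := by exact_mod_cast hk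
  have hsub : Ioc 0 α ⊆ Ioo (-δ) δ := fun s hs => ⟨by linarith [hs.1], hs.2.trans_lt hαδ⟩
  have hC1 : ∀ x ∈ Ioo (-δ) δ, ContDiffAt ℝ 1 f x :=
    fun x hx => hf1.contDiffAt (isOpen_Ioo.mem_nhds hx)
  have hpos : ∀ s ∈ Ioc 0 α, 0 < f s := fun s hs => hf3 s ⟨hs.1, hs.2.trans_lt hαδ⟩
  have hO : f =O[𝓝[>] 0] id := by
    have h0 : (0 : ℝ) ∈ Ioo (-δ) δ := ⟨neg_lt_zero.2 (hα.trans hαδ), hα.trans hαδ⟩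
    have := ((hC1 0 h0).differentiableAt one_ne_zero).isBigO_sub
    simp only [hf0, sub_zero] at this
    exact this.mono nhdsWithin_le_nhds
  obtain ⟨v, hv, hv0, hanti, hmem, hlim⟩ :=
    exists_radial_solution_s10 hα hk₀ (hf1.continuousOn.mono hsub) hpos hO
  refine ⟨v, fun r _ => hv r, hv0, hanti, fun r _ => hmem r, hlim, fun r hr => ?_,
    fun w hw hw0 => ?_⟩
  · have hx := hsub (hmem r)
    have hf' : 0 ≤ deriv f (v r) := by
      rw [← derivWithin_of_isOpen isOpen_Ioo hx]
      exact hf2.derivWithin_nonneg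
    exact div_le_deriv_deriv_of_hasDerivAt hr hv
      ((hC1 _ hx).differentiableAt one_ne_zero).hasDerivAt hf' (hpos _ (hmem r)).le
  · refine eqOn_Ici_of_hasDerivAt_of_lipschitzOnWith (F := fun t y => -(t / k) * f y)
      (fun t _ => ?_) (fun t _ => hv t) hw (hw0.trans hv0.symm)
    obtain ⟨K, U, hU, hK⟩ := (hC1 _ (hsub (hmem t))).exists_lipschitzOnWith
    obtain ⟨K', hK'⟩ :=
      eventually_lipschitzOnWith_smul (c := fun s => -(s / k)) (t := t) (by fun_prop) hK
    exact ⟨K', U, hU, hK'⟩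

/-- under the assumptions (3.2) on `f`, for every `α ∈ (0,δ)` the initial
value problem `v'(r) + (r/k) f(v(r)) = 0`, `v(0) = α` has a unique solution defined on all
of `[0,∞)`, which is strictly decreasing, satisfies `0 < v ≤ α`, tends to `0` at `+∞`,
and satisfies `v''(r) ≥ v'(r)/r` for every `r > 0`. -/
theorem stmt10 (k : ℕ) (hk : 1 ≤ k)
    (f : ℝ → ℝ) (δ : ℝ) (hδ : 0 < δ)
    (hf1 : ContDiffOn ℝ 1 f (Set.Ioo (-δ) δ))
    (hf2 : MonotoneOn f (Set.Ioo (-δ) δ))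
    (hf3 : ∀ s ∈ Set.Ioo (0 : ℝ) δ, 0 < f s)
    (hf0 : f 0 = 0) :
    ∀ α ∈ Set.Ioo (0 : ℝ) δ, ∃ v : ℝ → ℝ,
      (∀ r ∈ Set.Ici (0 : ℝ), HasDerivAt v (-(r / k) * f (v r)) r) ∧
      v 0 = α ∧
      StrictAntiOn v (Set.Ici 0) ∧
      (∀ r ∈ Set.Ici (0 : ℝ), 0 < v r ∧ v r ≤ α) ∧
      Filter.Tendsto v Filter.atTop (nhds 0) ∧
      (∀ r : ℝ, 0 < r → deriv v r / r ≤ deriv (deriv v) r) ∧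
      (∀ w : ℝ → ℝ, (∀ r ∈ Set.Ici (0 : ℝ), HasDerivAt w (-(r / k) * f (w r)) r) →
        w 0 = α → ∀ r ∈ Set.Ici (0 : ℝ), w r = v r) :=
  stmt10_general k hk f δ hf1 hf2 hf3 hf0
end

section
/- Let N ≥ 2 and 1 ≤ k ≤ N−1, and let α ∈ (0, 1/√3]. Define u_α : ℝ^N → ℝ by u_α(x) = 1/√(1 + C e^{|x|²/k}), where C = (1 − α²)/α². Then u_α is a C² radial function with u_α(0) = α, 0 < u_α(x) < 1 for all x, u_α(x) → 0 as |x| → ∞, and u_α is a classical solution of P⁻_k(D²u) + u − u³ = 0 in ℝ^N, i.e. P⁻_k(D²u_α(x)) + u_α(x) − u_α(x)³ = 0 for every x ∈ ℝ^N. -/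
open Real

section Profile

noncomputable def profile (c K s : ℝ) : ℝ := 1 / √(1 + c * exp (s / K))

noncomputable def profileDeriv (c K s : ℝ) : ℝ :=
  -(c * exp (s / K)) / (2 * K) * profile c K s ^ 3

noncomputable def profileDeriv2 (c K s : ℝ) : ℝ :=
  c * exp (s / K) * (c * exp (s / K) - 2) / (4 * K ^ 2) * profile c K s ^ 5

variable {c K : ℝ}

lemma one_add_mul_exp_pos (hc : 0 ≤ c) (s : ℝ) : 0 < 1 + c * exp (s / K) := by positivity

lemma profile_pos (hc : 0 ≤ c) (s : ℝ) : 0 < profile c K s := by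
  have := one_add_mul_exp_pos (K := K) hc s
  unfold profile; positivity

lemma profile_sq_mul (hc : 0 ≤ c) (s : ℝ) : profile c K s ^ 2 * (1 + c * exp (s / K)) = 1 := by
  have := one_add_mul_exp_pos (K := K) hc s
  rw [profile, div_pow, sq_sqrt this.le]
  field_simp

lemma hasDerivAt_mul_exp_div (s : ℝ) :
    HasDerivAt (fun s => c * exp (s / K)) (c * exp (s / K) / K) s :=
  ((((hasDerivAt_id s).div_const K).exp).const_mul c).congr_deriv (by simp only [id]; ring)

lemma hasDerivAt_profile (hc : 0 ≤ c) (s : ℝ) :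
    HasDerivAt (profile c K) (profileDeriv c K s) s := by
  have hh := one_add_mul_exp_pos (K := K) hc s
  refine ((hasDerivAt_const s (1 : ℝ)).fun_div
    (((hasDerivAt_mul_exp_div s).const_add 1).sqrt hh.ne') (by positivity)).congr_deriv ?_
  rw [profileDeriv, profile]
  field_simp
  rw [sq_sqrt hh.le]
  ring

lemma hasDerivAt_profileDeriv (hc : 0 ≤ c) (s : ℝ) :
    HasDerivAt (profileDeriv c K) (profileDeriv2 c K s) s := by
  refine (((hasDerivAt_mul_exp_div s).neg.div_const (2 * K)).mul
    ((hasDerivAt_profile hc s).pow 3)).congr_deriv ?_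
  simp only [profileDeriv2, profileDeriv, Pi.pow_apply, Pi.neg_apply]
  linear_combination
    (exp (s / K) * c * profile c K s ^ 3 / (2 * K ^ 2)) * profile_sq_mul (K := K) hc s

lemma two_mul_profileDeriv_add_profile_sub_pow_three (hc : 0 ≤ c) (hK : K ≠ 0) (s : ℝ) :
    2 * K * profileDeriv c K s + profile c K s - profile c K s ^ 3 = 0 := by
  have hderiv : 2 * K * profileDeriv c K s = -(c * exp (s / K)) * profile c K s ^ 3 := by
    rw [profileDeriv]; field_simp
  linear_combination hderiv - profile c K s * profile_sq_mul (K := K) hc s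

lemma profileDeriv2_nonneg (hc : 2 ≤ c) (hK : 0 ≤ K) {s : ℝ} (hs : 0 ≤ s) :
    0 ≤ profileDeriv2 c K s := by
  have hexp : 1 ≤ exp (s / K) := one_le_exp (by positivity)
  have hF := profile_pos (c := c) (K := K) (by linarith) s
  have hE : 0 ≤ c * exp (s / K) - 2 := by nlinarith
  rw [profileDeriv2]
  exact mul_nonneg (div_nonneg (mul_nonneg (by linarith) hE) (by positivity)) (pow_nonneg hF.le 5)

lemma contDiff_profile (hc : 0 ≤ c) : ContDiff ℝ 2 (profile c K) :=
  contDiff_const.div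
    ((contDiff_const.add (contDiff_const.mul (contDiff_exp.comp (contDiff_id.div_const K)))).sqrt
      fun s => (one_add_mul_exp_pos hc s).ne')
    fun s => (sqrt_pos.2 (one_add_mul_exp_pos hc s)).ne'

lemma profile_lt_one (hc : 0 < c) (s : ℝ) : profile c K s < 1 := by
  have : 1 < √(1 + c * exp (s / K)) := by
    rw [lt_sqrt zero_le_one]; nlinarith [exp_pos (s / K)]
  rw [profile, div_lt_one (by linarith)]
  exact this

lemma profile_zero {α : ℝ} (hα : 0 < α) : profile ((1 - α ^ 2) / α ^ 2) K 0 = α := by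
  rw [profile, zero_div, exp_zero, mul_one,
    show 1 + (1 - α ^ 2) / α ^ 2 = (α⁻¹) ^ 2 by field_simp; ring, sqrt_sq (by positivity)]
  simp

lemma tendsto_profile_atTop (hc : 0 < c) (hK : 0 < K) :
    Filter.Tendsto (profile c K) Filter.atTop (nhds 0) := by
  have : Filter.Tendsto (fun s => 1 + c * exp (s / K)) Filter.atTop Filter.atTop :=
    Filter.tendsto_atTop_add_const_left _ _
      ((tendsto_exp_atTop.comp (Filter.tendsto_id.atTop_div_const hK)).const_mul_atTop hc)
  exact (tendsto_sqrt_atTop.comp this).inv_tendsto_atTop.congr fun s => (one_div _).symm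

lemma two_le_one_sub_sq_div_sq {α : ℝ} (hα : α ∈ Set.Ioc (0 : ℝ) (√3)⁻¹) :
    2 ≤ (1 - α ^ 2) / α ^ 2 := by
  obtain ⟨hα0, hα1⟩ := hα
  have : α ^ 2 ≤ 1 / 3 := by
    calc α ^ 2 ≤ ((√3)⁻¹) ^ 2 := pow_le_pow_left₀ hα0.le hα1 2
      _ = 1 / 3 := by rw [inv_pow, sq_sqrt (by norm_num)]; norm_num
  rw [le_div_iff₀ (by positivity)]
  linarith

end Profile

section RadialHessian

lemma hasFDerivAt_comp_norm_sq_s13 {E : Type*} [NormedAddCommGroup E] [InnerProductSpace ℝ E]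
    {f f' : ℝ → ℝ} {x : E} (hf : HasDerivAt f (f' (‖x‖ ^ 2)) (‖x‖ ^ 2)) :
    HasFDerivAt (fun z => f (‖z‖ ^ 2)) ((2 * f' (‖x‖ ^ 2)) • innerSL ℝ x) x := by
  refine (hf.comp_hasFDerivAt x (hasStrictFDerivAt_norm_sq x).hasFDerivAt).congr_fderiv ?_
  ext
  simp only [smul_apply, coe_innerSL_apply, nsmul_eq_mul, Nat.cast_ofNat, smul_eq_mul]
  ring

lemma fderiv_fderiv_comp_norm_sq {E : Type*} [NormedAddCommGroup E] [InnerProductSpace ℝ E]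
    {f f' f'' : ℝ → ℝ} (hf : ∀ s, HasDerivAt f (f' s) s) (hf' : ∀ s, HasDerivAt f' (f'' s) s)
    (x v w : E) :
    fderiv ℝ (fderiv ℝ fun z => f (‖z‖ ^ 2)) x v w =
      2 * f' (‖x‖ ^ 2) * inner ℝ v w + 4 * f'' (‖x‖ ^ 2) * inner ℝ x v * inner ℝ x w := by
  have hD : fderiv ℝ (fun z : E => f (‖z‖ ^ 2)) =
      fun y => (2 * f' (‖y‖ ^ 2)) • innerSL ℝ y :=
    funext fun y => (hasFDerivAt_comp_norm_sq_s13 (hf _)).fderiv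
  have hD2 := ((hasFDerivAt_comp_norm_sq_s13 (hf' _)).const_mul 2).fun_smul
    ((innerSL ℝ : E →L[ℝ] E →L[ℝ] ℝ).hasFDerivAt (x := x))
  rw [hD, hD2.fderiv]
  simp only [add_apply, smul_apply, ContinuousLinearMap.smulRight_apply, smul_eq_mul]
  rw [innerSL_apply_apply, innerSL_apply_apply, innerSL_apply_apply]
  ring

theorem hess_comp_norm_sq_s13 {N : ℕ} {f f' f'' : ℝ → ℝ} (hf : ∀ s, HasDerivAt f (f' s) s)
    (hf' : ∀ s, HasDerivAt f' (f'' s) s) (x : EuclideanSpace ℝ (Fin N)) :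
    hess (fun z => f (‖z‖ ^ 2)) x =
      (2 * f' (‖x‖ ^ 2)) • (1 : Matrix (Fin N) (Fin N) ℝ) +
        (4 * f'' (‖x‖ ^ 2)) • Matrix.vecMulVec x x := by
  ext i j
  rw [hess, iteratedFDeriv_two_apply]
  simp [fderiv_fderiv_comp_norm_sq hf hf', Matrix.one_apply, Matrix.vecMulVec_apply,
    EuclideanSpace.inner_single_right, eq_comm (a := j), mul_assoc]

end RadialHessian

section TruncLap

open Matrix

lemma exists_orthonormal_orthogonal {E : Type*} [NormedAddCommGroup E] [InnerProductSpace ℝ E]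
    [FiniteDimensional ℝ E] {k : ℕ} (hk : k + 1 ≤ Module.finrank ℝ E) (x : E) :
    ∃ v : Fin k → E, Orthonormal ℝ v ∧ ∀ i, inner ℝ x (v i) = 0 := by
  have hW : k ≤ Module.finrank ℝ (ℝ ∙ x)ᗮ := by
    have := Submodule.finrank_add_finrank_orthogonal (ℝ ∙ x)
    have : Module.finrank ℝ (ℝ ∙ x) ≤ 1 := by
      simpa using finrank_span_le_card (R := ℝ) ({x} : Set E)
    omega
  let B := stdOrthonormalBasis ℝ (ℝ ∙ x)ᗮ
  refine ⟨fun i => B (Fin.castLE hW i), ?_, fun i => ?_⟩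
  · exact (B.orthonormal.comp _ (Fin.castLE_injective hW)).comp_linearIsometry
      (ℝ ∙ x)ᗮ.subtypeₗᵢ
  · exact (Submodule.mem_orthogonal_singleton_iff_inner_right).1 (B (Fin.castLE hW i)).2

lemma dotProduct_mulVec_smul_one_add_vecMulVec {N : ℕ} (a b : ℝ) (x w : Fin N → ℝ) :
    (a • 1 + b • vecMulVec x x) *ᵥ w ⬝ᵥ w = a * (w ⬝ᵥ w) + b * (x ⬝ᵥ w) ^ 2 := by
  rw [add_mulVec, smul_mulVec, smul_mulVec, one_mulVec, vecMulVec_mulVec, add_dotProduct,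
    smul_dotProduct, smul_dotProduct, smul_dotProduct]
  simp only [smul_eq_mul, op_smul_eq_smul]
  ring

lemma sum_dotProduct_mulVec_smul_one_add_vecMulVec {N k : ℕ} (a b : ℝ) (x : Fin N → ℝ)
    {v : Fin k → Fin N → ℝ} (hv : ∀ i, v i ⬝ᵥ v i = 1) :
    ∑ i, (a • 1 + b • vecMulVec x x) *ᵥ v i ⬝ᵥ v i = k * a + b * ∑ i, (x ⬝ᵥ v i) ^ 2 := by
  simp only [dotProduct_mulVec_smul_one_add_vecMulVec, hv, Finset.sum_add_distrib,
    Finset.mul_sum, Finset.sum_const, Finset.card_univ, Fintype.card_fin, nsmul_eq_mul, mul_one]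

theorem truncLap_smul_one_add_vecMulVec {N k : ℕ} (hk : k + 1 ≤ N) (a : ℝ) {b : ℝ} (hb : 0 ≤ b)
    (x : Fin N → ℝ) : truncLap k (a • 1 + b • vecMulVec x x) = k * a := by
  obtain ⟨v, hv, hvx⟩ := exists_orthonormal_orthogonal (k := k)
    (by rwa [finrank_euclideanSpace_fin]) (WithLp.toLp 2 x)
  have hdot (i j : Fin k) : (v i).ofLp ⬝ᵥ (v j).ofLp = inner ℝ (v i) (v j) := by
    rw [EuclideanSpace.inner_eq_star_dotProduct, star_trivial, dotProduct_comm]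
  have hxv (i : Fin k) : x ⬝ᵥ (v i).ofLp = 0 := by
    rw [← hvx i, EuclideanSpace.inner_eq_star_dotProduct, star_trivial, dotProduct_comm]
  refine IsLeast.csInf_eq ⟨⟨fun i => (v i).ofLp, fun i j => ?_, ?_⟩, ?_⟩
  · rw [hdot, orthonormal_iff_ite.1 hv]
  · rw [sum_dotProduct_mulVec_smul_one_add_vecMulVec a b x fun i => by
      rw [hdot, real_inner_self_eq_norm_sq, hv.1 i, one_pow]]
    simp [hxv]
  · rintro s ⟨w, hw, rfl⟩
    rw [sum_dotProduct_mulVec_smul_one_add_vecMulVec a b x fun i => by rw [hw, if_pos rfl]]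
    have : 0 ≤ b * ∑ i, (x ⬝ᵥ w i) ^ 2 := by positivity
    linarith

end TruncLap

/-- for `α ∈ (0, 1/√3]`, the radial function
`u_α(x) = (1 + C e^{|x|²/k})^{-1/2}` with `C = (1-α²)/α²` is a C² radial function with
`u_α(0) = α`, `0 < u_α < 1`, `u_α(x) → 0` as `|x| → ∞`, and is a classical solution of
`P⁻ₖ(D²u) + u - u³ = 0` in `ℝ^N`. -/
theorem stmt13 {n : ℕ} (k : ℕ) (hk1 : 1 ≤ k) (hk2 : k ≤ n + 1)
    (α : ℝ) (hα : α ∈ Set.Ioc (0 : ℝ) (Real.sqrt 3)⁻¹)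
    (u : EuclideanSpace ℝ (Fin (n + 2)) → ℝ)
    (hu : ∀ x, u x = 1 / Real.sqrt (1 + (1 - α ^ 2) / α ^ 2 * Real.exp (‖x‖ ^ 2 / k))) :
    ContDiff ℝ 2 u ∧ (∃ v : ℝ → ℝ, ∀ x, u x = v ‖x‖) ∧ u 0 = α ∧
    (∀ x, 0 < u x ∧ u x < 1) ∧
    Filter.Tendsto u (Filter.comap norm Filter.atTop) (nhds 0) ∧
    (∀ x, truncLap k (hess u x) + u x - (u x) ^ 3 = 0) := by
  have hc := two_le_one_sub_sq_div_sq hα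
  have hc0 : 0 ≤ (1 - α ^ 2) / α ^ 2 := by linarith
  have hK : (0 : ℝ) < k := by exact_mod_cast hk1
  obtain rfl : u = fun x => profile ((1 - α ^ 2) / α ^ 2) k (‖x‖ ^ 2) := funext hu
  refine ⟨(contDiff_profile hc0).comp (contDiff_norm_sq ℝ), ⟨fun r => profile _ k (r ^ 2),
    fun _ => rfl⟩, by simpa using profile_zero hα.1,
    fun x => ⟨profile_pos hc0 _, profile_lt_one (by linarith) _⟩,
    (tendsto_profile_atTop (by linarith) hK).comp
      ((Filter.tendsto_pow_atTop two_ne_zero).comp Filter.tendsto_comap), fun x => ?_⟩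
  rw [hess_comp_norm_sq_s13 (hasDerivAt_profile hc0) (hasDerivAt_profileDeriv hc0),
    truncLap_smul_one_add_vecMulVec (by omega) _
      (mul_nonneg zero_le_four (profileDeriv2_nonneg hc hK.le (by positivity)))]
  linarith [two_mul_profileDeriv_add_profile_sub_pow_three hc0 hK.ne' (‖x‖ ^ 2)]
end

section
/- Let N ≥ 2 and 1 ≤ k ≤ N−1. For every N×N real symmetric matrix X there exists an N×N real symmetric positive semidefinite matrix M with M ≠ 0 such that P⁻_k(X + M) = P⁻_k(X). (One may take M = v_N v_Nᵀ, where v_N is a unit eigenvector of X corresponding to its largest eigenvalue.) -/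
/-!
Diagonalise `X` in an orthonormal eigenbasis `b` with eigenvalues `μ`. For an orthonormal family
`v₁, …, v_k` the weights `c_j = ∑ᵢ ⟪vᵢ, b_j⟫²` lie in `[0, 1]` (Bessel) and sum to `k` (Parseval),
while `∑ᵢ ⟪X vᵢ, vᵢ⟫ = ∑_j μ_j c_j`. Such a weighted sum is at least the sum of the `k` smallest
`μ_j`, which is attained by the corresponding eigenvectors (Ky Fan). Since `k < N`, some
eigenvector `b_p` is not among them; adding `M = b_p b_pᵀ` only raises `μ_p` by one, so the `k`
smallest eigenvalues, and hence `P⁻ₖ`, do not change.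
-/

open Finset Matrix

theorem sum_le_sum_mul_of_forall_le_of_forall_ge {ι : Type*} [Fintype ι]
    {μ d : ι → ℝ} {s : Finset ι} {t : ℝ}
    (hμs : ∀ i ∈ s, μ i ≤ t) (hμsc : ∀ i ∉ s, t ≤ μ i)
    (hd0 : ∀ i, 0 ≤ d i) (hd1 : ∀ i, d i ≤ 1) (hd : ∑ i, d i = #s) :
    ∑ i ∈ s, μ i ≤ ∑ i, μ i * d i := by
  classical
  set χ : ι → ℝ := fun i => if i ∈ s then 1 else 0
  -- termwise, `μ i - t` and `d i - χ i` have the same sign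
  have key : 0 ≤ ∑ i, (μ i - t) * (d i - χ i) := by
    refine sum_nonneg fun i _ => ?_
    by_cases hi : i ∈ s
    · simpa [χ, hi] using mul_nonneg_of_nonpos_of_nonpos (sub_nonpos.2 (hμs i hi))
        (sub_nonpos.2 (hd1 i))
    · simpa [χ, hi] using mul_nonneg (sub_nonneg.2 (hμsc i hi)) (hd0 i)
  have hχ (f : ι → ℝ) : ∑ i, f i * χ i = ∑ i ∈ s, f i := by
    simp [χ, mul_ite, sum_ite_mem]
  have expand : ∑ i, (μ i - t) * (d i - χ i) = ∑ i, μ i * d i - ∑ i ∈ s, μ i := by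
    simp only [sub_mul, mul_sub, sum_sub_distrib, ← mul_sum, hχ, hd, sum_const, nsmul_eq_mul]
    ring
  linarith

section EigenbasisInnerProductSpace

variable {E ι : Type*} [NormedAddCommGroup E] [InnerProductSpace ℝ E] [Fintype ι]
  (b : OrthonormalBasis ι ℝ E) {T : E →ₗ[ℝ] E} {μ : ι → ℝ}

theorem inner_map_self_eq_sum_of_eigenbasis (hT : ∀ j, T (b j) = μ j • b j) (x : E) :
    inner ℝ (T x) x = ∑ j, μ j * inner ℝ x (b j) ^ 2 := by
  have hTx : T x = ∑ j, inner ℝ x (b j) • μ j • b j := by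
    conv_lhs => rw [← b.sum_repr' x]
    simp only [map_sum, map_smul, hT, real_inner_comm x]
  rw [hTx, sum_inner]
  refine sum_congr rfl fun j _ => ?_
  rw [real_inner_smul_left, real_inner_smul_left, real_inner_comm x]
  ring

theorem sum_le_sum_inner_map_of_orthonormal (hT : ∀ j, T (b j) = μ j • b j)
    {κ : Type*} [Fintype κ] {v : κ → E} (hv : Orthonormal ℝ v) {s : Finset ι} {t : ℝ}
    (hs : #s = Fintype.card κ) (hμs : ∀ j ∈ s, μ j ≤ t) (hμsc : ∀ j ∉ s, t ≤ μ j) :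
    ∑ j ∈ s, μ j ≤ ∑ i, inner ℝ (T (v i)) (v i) := by
  set c : ι → ℝ := fun j => ∑ i, inner ℝ (v i) (b j) ^ 2
  have hc0 (j : ι) : 0 ≤ c j := sum_nonneg fun i _ => sq_nonneg _
  have hc1 (j : ι) : c j ≤ 1 := by
    simpa [b.orthonormal.1 j] using hv.sum_inner_products_le (s := univ) (b j)
  have hc : ∑ j, c j = #s := by
    rw [sum_comm, hs]
    simp [b.sum_sq_inner_left, hv.1]
  calc ∑ j ∈ s, μ j ≤ ∑ j, μ j * c j :=
        sum_le_sum_mul_of_forall_le_of_forall_ge hμs hμsc hc0 hc1 hc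
    _ = ∑ i, inner ℝ (T (v i)) (v i) := by
        simp only [inner_map_self_eq_sum_of_eigenbasis b hT, c, mul_sum]
        exact sum_comm

end EigenbasisInnerProductSpace

section EigenbasisMatrix

variable {ι : Type*} [Fintype ι] [DecidableEq ι]
  (b : OrthonormalBasis ι ℝ (EuclideanSpace ℝ ι)) {X : Matrix ι ι ℝ} {μ : ι → ℝ}

theorem OrthonormalBasis.dotProduct_ofLp (p q : ι) :
    ⇑(b p) ⬝ᵥ ⇑(b q) = if p = q then 1 else 0 := by
  rw [dotProduct_comm, ← star_trivial (b p).ofLp, ← EuclideanSpace.inner_eq_star_dotProduct]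
  exact orthonormal_iff_ite.1 b.orthonormal p q

theorem mulVec_eigenbasis_add_vecMulVec (hb : ∀ j, X *ᵥ ⇑(b j) = μ j • ⇑(b j)) (p j : ι) :
    (X + vecMulVec (b p) (b p)) *ᵥ ⇑(b j) = Function.update μ p (μ p + 1) j • ⇑(b j) := by
  rw [add_mulVec, vecMulVec_mulVec, hb, b.dotProduct_ofLp]
  rcases eq_or_ne j p with rfl | hjp
  · simp [add_smul]
  · simp [hjp, hjp.symm]

end EigenbasisMatrix

section TruncLap

variable {N : ℕ} (b : OrthonormalBasis (Fin N) ℝ (EuclideanSpace ℝ (Fin N)))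
  {X : Matrix (Fin N) (Fin N) ℝ} {μ : Fin N → ℝ} {s : Finset (Fin N)} {t : ℝ}

theorem truncLap_eq_sum_of_eigenbasis (hb : ∀ j, X *ᵥ ⇑(b j) = μ j • ⇑(b j))
    (hμs : ∀ j ∈ s, μ j ≤ t) (hμsc : ∀ j ∉ s, t ≤ μ j) :
    truncLap #s X = ∑ j ∈ s, μ j := by
  refine IsLeast.csInf_eq ⟨⟨fun i => b (s.equivFin.symm i), fun i j => ?_, ?_⟩, ?_⟩
  · simp [b.dotProduct_ofLp]
  · simp only [hb, smul_dotProduct, b.dotProduct_ofLp, if_true, smul_eq_mul, mul_one]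
    rw [s.equivFin.symm.sum_comp (fun j => μ j), sum_coe_sort]
  · rintro _ ⟨v, hv, rfl⟩
    have hT (j : Fin N) : toLpLin 2 2 X (b j) = μ j • b j := by
      simp [toLpLin_apply, hb]
    have hv' : Orthonormal ℝ fun i => WithLp.toLp 2 (v i) := orthonormal_iff_ite.2 fun i j => by
      rw [EuclideanSpace.inner_toLp_toLp, star_trivial, dotProduct_comm, hv]
    refine (sum_le_sum_inner_map_of_orthonormal b hT hv' (by simp) hμs hμsc).trans_eq
      (sum_congr rfl fun i _ => ?_)
    rw [toLpLin_apply, EuclideanSpace.inner_toLp_toLp, star_trivial, dotProduct_comm]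

theorem truncLap_add_vecMulVec_eigenbasis (hb : ∀ j, X *ᵥ ⇑(b j) = μ j • ⇑(b j))
    (hμs : ∀ j ∈ s, μ j ≤ t) (hμsc : ∀ j ∉ s, t ≤ μ j) {p : Fin N} (hp : p ∉ s) :
    truncLap #s (X + vecMulVec (b p) (b p)) = truncLap #s X := by
  have hne {j : Fin N} (hj : j ∈ s) : j ≠ p := ne_of_mem_of_not_mem hj hp
  rw [truncLap_eq_sum_of_eigenbasis b hb hμs hμsc,
    truncLap_eq_sum_of_eigenbasis b (mulVec_eigenbasis_add_vecMulVec b hb p)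
      (fun j hj => by simpa [hne hj] using hμs j hj) (fun j hj => ?_)]
  · exact sum_congr rfl fun j hj => Function.update_of_ne (hne hj) _ _
  · rcases eq_or_ne j p with rfl | hjp
    · simpa using (hμsc j hj).trans (le_add_of_nonneg_right zero_le_one)
    · simpa [hjp] using hμsc j hj

end TruncLap

theorem exists_finset_card_eq_forall_le_forall_ge {α : Type*} [LinearOrder α] {N k : ℕ}
    (hk : k < N) (μ : Fin N → α) :
    ∃ s : Finset (Fin N), #s = k ∧ ∃ t, (∀ j ∈ s, μ j ≤ t) ∧ ∀ j ∉ s, t ≤ μ j := by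
  set σ := Tuple.sort μ
  have hμσ (j : Fin N) : μ j = (μ ∘ σ) (σ.symm j) := by simp
  refine ⟨(univ.filter fun i : Fin N => (i : ℕ) < k).map σ.toEmbedding, ?_, μ (σ ⟨k, hk⟩),
    fun j hj => ?_, fun j hj => ?_⟩
  · rw [card_map, Fin.card_filter_val_lt, min_eq_right hk.le]
  all_goals
    simp only [mem_map_equiv, mem_filter, mem_univ, true_and, not_lt] at hj
    rw [hμσ j]
    apply Tuple.monotone_sort μ
    rw [Fin.le_def]
    dsimp only
    omega

theorem stmt17_general {n : ℕ} (k : ℕ) (hk2 : k ≤ n + 1)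
    (X : Matrix (Fin (n + 2)) (Fin (n + 2)) ℝ) (hX : X.IsHermitian) :
    ∃ M : Matrix (Fin (n + 2)) (Fin (n + 2)) ℝ,
      M.PosSemidef ∧ M ≠ 0 ∧ truncLap k (X + M) = truncLap k X := by
  have hk : k < n + 2 := Nat.lt_succ_of_le hk2
  obtain ⟨s, rfl, t, hμs, hμsc⟩ := exists_finset_card_eq_forall_le_forall_ge hk hX.eigenvalues
  obtain ⟨p, -, hp⟩ := exists_mem_notMem_of_card_lt_card (s := s) (t := univ) (by simpa using hk)
  set b := hX.eigenvectorBasis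
  refine ⟨vecMulVec (b p) (b p), by simpa using posSemidef_vecMulVec_self_star (b p).ofLp,
    fun h => ?_, truncLap_add_vecMulVec_eigenbasis b hX.mulVec_eigenvectorBasis hμs hμsc hp⟩
  rw [vecMulVec_eq_zero, or_self] at h
  simpa [h] using b.dotProduct_ofLp p p

/-- for every real symmetric `N×N` matrix `X` (N = n+2, 1 ≤ k ≤ N-1) there
is a nonzero positive semidefinite symmetric matrix `M` with `P⁻ₖ(X + M) = P⁻ₖ(X)`. -/
theorem stmt17 {n : ℕ} (k : ℕ) (hk1 : 1 ≤ k) (hk2 : k ≤ n + 1)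
    (X : Matrix (Fin (n + 2)) (Fin (n + 2)) ℝ) (hX : X.IsHermitian) :
    ∃ M : Matrix (Fin (n + 2)) (Fin (n + 2)) ℝ,
      M.PosSemidef ∧ M ≠ 0 ∧ truncLap k (X + M) = truncLap k X :=
  stmt17_general k hk2 X hX
end
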